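/- arXiv:2404.11307 — 8 statements merged into one kernel-verified Lean document; each statement's English description precedes it below -/
import Mathlib

section
/- Let G be a finite abelian group and S a zero-sum free sequence over G (i.e., no nonempty subsequence of S sums to 0). Then the number of distinct subsequence sums of S satisfies |Σ(S)| ≥ |S| + |supp(S)| − 1. -/
/-- Set of sums of nonempty subsequences of `S`. -/
def subSums {G : Type*} [AddCommMonoid G] (S : Multiset G) : Set G :=
  {x | ∃ T : Multiset G, T ≤ S ∧ T ≠ 0 ∧ T.sum = x}

/-- Set of sums of subsequences of `S` of length exactly `k`. -/
def sumsLen {G : Type*} [AddCommMonoid G] (k : ℕ) (S : Multiset G) : Set G :=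
  {x | ∃ T : Multiset G, T ≤ S ∧ Multiset.card T = k ∧ T.sum = x}

/-- Set of sums of subsequences of `S` of length at least `k`. -/
def sumsGe {G : Type*} [AddCommMonoid G] (k : ℕ) (S : Multiset G) : Set G :=
  {x | ∃ T : Multiset G, T ≤ S ∧ k ≤ Multiset.card T ∧ T.sum = x}

/-!
Let `D = Σ(S) ∪ {0}` and `σ = σ(S)`. Deleting an element `a` of a zero-sum free `S` always loses
a sum, since `a + (Σ(S \ a) ∪ {0})` lies in `D` but misses `0`; this handles repeated elements.
If `S` has two distinct elements `a ≠ b`, deleting one of them loses at least two sums. Otherwise,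
for `c = a, b`, counting gives `Σ(S \ c) ∪ {0} = D \ {σ}` and `c + (D \ {σ}) = D \ {0}`. Then both
`D \ {σ}` and `D \ {0}` are invariant under translation by `a - b ≠ 0`; the first contains `0`,
hence `a - b`, so the second contains `a - b`, hence `0`: a contradiction.
-/

open Pointwise

section

variable {G : Type*}

def ZeroSumFree [AddCommMonoid G] (S : Multiset G) : Prop :=
  ∀ T ≤ S, T.sum = 0 → T = 0

theorem zeroSumFree_of_zero_notMem_subSums [AddCommMonoid G] {S : Multiset G}
    (h : (0 : G) ∉ subSums S) : ZeroSumFree S :=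
  fun T hT hsum => by_contra fun hT0 => h ⟨T, hT, hT0, hsum⟩

theorem ZeroSumFree.sum_ne_zero [AddCommMonoid G] {S : Multiset G} (hS : ZeroSumFree S)
    (h : S ≠ 0) : S.sum ≠ 0 :=
  fun h0 => h (hS S le_rfl h0)

theorem ZeroSumFree.mono [AddCommMonoid G] {S T : Multiset G} (hS : ZeroSumFree S)
    (hT : T ≤ S) : ZeroSumFree T :=
  fun U hU => hS U (hU.trans hT)

theorem Multiset.toFinset_subset_insert_toFinset_erase [DecidableEq G] (S : Multiset G) (a : G) :
    S.toFinset ⊆ insert a (S.erase a).toFinset := by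
  intro x hx
  rw [Finset.mem_insert, Multiset.mem_toFinset]
  by_cases hxa : x = a
  · exact Or.inl hxa
  · exact Or.inr ((Multiset.mem_erase_of_ne hxa).2 (Multiset.mem_toFinset.1 hx))

section subSums₀

variable [AddCommMonoid G] [DecidableEq G]

/-- `Σ(S) ∪ {0}`, as a finset: the sums of all subsequences, the empty one included. -/
def subSums₀ (S : Multiset G) : Finset G :=
  (S.powerset.map Multiset.sum).toFinset

theorem mem_subSums₀ {S : Multiset G} {x : G} : x ∈ subSums₀ S ↔ ∃ T ≤ S, T.sum = x := by
  simp [subSums₀]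

theorem zero_mem_subSums₀ (S : Multiset G) : 0 ∈ subSums₀ S :=
  mem_subSums₀.2 ⟨0, Multiset.zero_le S, Multiset.sum_zero⟩

theorem sum_mem_subSums₀ (S : Multiset G) : S.sum ∈ subSums₀ S :=
  mem_subSums₀.2 ⟨S, le_rfl, rfl⟩

theorem subSums₀_mono {S T : Multiset G} (h : T ≤ S) : subSums₀ T ⊆ subSums₀ S := by
  intro x hx
  obtain ⟨U, hU, rfl⟩ := mem_subSums₀.1 hx
  exact mem_subSums₀.2 ⟨U, hU.trans h, rfl⟩

theorem insert_zero_subSums (S : Multiset G) : insert 0 (subSums S) = ↑(subSums₀ S) := by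
  ext x
  simp only [Set.mem_insert_iff, subSums, Set.mem_ofPred_eq, Finset.mem_coe, mem_subSums₀]
  constructor
  · rintro (rfl | ⟨T, hT, -, rfl⟩)
    exacts [⟨0, Multiset.zero_le S, Multiset.sum_zero⟩, ⟨T, hT, rfl⟩]
  · rintro ⟨T, hT, rfl⟩
    by_cases hT0 : T = 0
    · exact Or.inl (by simp [hT0])
    · exact Or.inr ⟨T, hT, hT0, rfl⟩

end subSums₀

section AddCommGroup

variable [AddCommGroup G] [DecidableEq G]

theorem vadd_subSums₀_erase_subset {S : Multiset G} {a : G} (ha : a ∈ S) :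
    a +ᵥ subSums₀ (S.erase a) ⊆ subSums₀ S := by
  intro x hx
  obtain ⟨y, hy, rfl⟩ := Finset.mem_vadd_finset.1 hx
  obtain ⟨T, hT, rfl⟩ := mem_subSums₀.1 hy
  refine mem_subSums₀.2 ⟨a ::ₘ T, ?_, Multiset.sum_cons a T⟩
  exact (Multiset.cons_le_cons a hT).trans_eq (Multiset.cons_erase ha)

theorem eq_of_vadd_eq_vadd {E F : Finset G} {a b : G} (hE : 0 ∈ E) (hF : 0 ∉ F)
    (hEF : E ⊆ insert 0 F) (ha : a +ᵥ E = F) (hb : b +ᵥ E = F) : a = b := by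
  by_contra hab
  have hgE : (a - b) +ᵥ E = E := calc
    (a - b) +ᵥ E = -b +ᵥ (a +ᵥ E) := by rw [vadd_vadd, neg_add_eq_sub]
    _ = -b +ᵥ (b +ᵥ E) := by rw [ha, hb]
    _ = E := neg_vadd_vadd b E
  have hgF : (a - b) +ᵥ F = F := by
    rw [← ha, vadd_vadd, add_comm, ← vadd_vadd, hgE]
  have hmemE : (a - b) +ᵥ (0 : G) ∈ E := hgE ▸ Finset.vadd_mem_vadd_finset hE
  rw [vadd_eq_add, add_zero] at hmemE
  have hmemF : (a - b) +ᵥ (0 : G) ∈ (a - b) +ᵥ F := by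
    rw [hgF, vadd_eq_add, add_zero]
    exact (Finset.mem_insert.1 (hEF hmemE)).resolve_left (sub_ne_zero.2 hab)
  exact hF ((Finset.vadd_mem_vadd_finset_iff _).1 hmemF)

namespace ZeroSumFree

variable {S : Multiset G} {a : G}

theorem sum_notMem_subSums₀_erase (hS : ZeroSumFree S) (ha : a ∈ S) :
    S.sum ∉ subSums₀ (S.erase a) := by
  intro h
  obtain ⟨T, hT, hsum⟩ := mem_subSums₀.1 h
  obtain ⟨U, hU⟩ := Multiset.le_iff_exists_add.1 hT
  have hS' : S = T + a ::ₘ U := by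
    rw [Multiset.add_cons, ← hU, Multiset.cons_erase ha]
  have hsumU : (a ::ₘ U).sum = 0 := by
    rwa [hS', Multiset.sum_add, left_eq_add] at hsum
  exact Multiset.cons_ne_zero (hS _ (hS' ▸ Multiset.le_add_left _ _) hsumU)

theorem zero_notMem_vadd_subSums₀_erase (hS : ZeroSumFree S) (ha : a ∈ S) :
    0 ∉ a +ᵥ subSums₀ (S.erase a) := by
  intro h
  obtain ⟨y, hy, hay⟩ := Finset.mem_vadd_finset.1 h
  obtain ⟨T, hT, rfl⟩ := mem_subSums₀.1 hy
  have hle : a ::ₘ T ≤ S :=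
    (Multiset.cons_le_cons a hT).trans_eq (Multiset.cons_erase ha)
  exact Multiset.cons_ne_zero (hS _ hle (by rw [Multiset.sum_cons]; exact hay))

theorem card_subSums₀_erase_lt (hS : ZeroSumFree S) (ha : a ∈ S) :
    (subSums₀ (S.erase a)).card < (subSums₀ S).card := by
  rw [← Finset.card_vadd_finset a]
  exact Finset.card_lt_card ⟨vadd_subSums₀_erase_subset ha,
    fun h => hS.zero_notMem_vadd_subSums₀_erase ha (h (zero_mem_subSums₀ S))⟩

theorem vadd_erase_sum_eq_erase_zero (hS : ZeroSumFree S) (ha : a ∈ S)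
    (hcard : (subSums₀ S).card ≤ (subSums₀ (S.erase a)).card + 1) :
    a +ᵥ (subSums₀ S).erase S.sum = (subSums₀ S).erase 0 := by
  have hσ := Finset.card_erase_of_mem (sum_mem_subSums₀ S)
  have h0 := Finset.card_erase_of_mem (zero_mem_subSums₀ S)
  have hE : subSums₀ (S.erase a) = (subSums₀ S).erase S.sum := by
    refine Finset.eq_of_subset_of_card_le (fun x hx => Finset.mem_erase.2 ⟨?_, ?_⟩) (by omega)
    · rintro rfl
      exact hS.sum_notMem_subSums₀_erase ha hx
    · exact subSums₀_mono (Multiset.erase_le a S) hx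
  rw [← hE]
  refine Finset.eq_of_subset_of_card_le (fun x hx => Finset.mem_erase.2 ⟨?_, ?_⟩) ?_
  · rintro rfl
    exact hS.zero_notMem_vadd_subSums₀_erase ha hx
  · exact vadd_subSums₀_erase_subset ha hx
  · rw [Finset.card_vadd_finset]
    omega

theorem exists_card_subSums₀_erase_add_two_le (hS : ZeroSumFree S) {b : G} (ha : a ∈ S)
    (hb : b ∈ S) (hab : a ≠ b) :
    ∃ c ∈ S, (subSums₀ (S.erase c)).card + 2 ≤ (subSums₀ S).card := by
  by_contra! h
  have hσ : S.sum ≠ 0 := hS.sum_ne_zero fun h => Multiset.notMem_zero a (h ▸ ha)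
  have h0 := zero_mem_subSums₀ S
  refine hab <| eq_of_vadd_eq_vadd (Finset.mem_erase.2 ⟨hσ.symm, h0⟩) (Finset.notMem_erase 0 _)
    ((Finset.erase_subset _ _).trans (Finset.insert_erase h0).ge)
    (hS.vadd_erase_sum_eq_erase_zero ha (by linarith [h a ha]))
    (hS.vadd_erase_sum_eq_erase_zero hb (by linarith [h b hb]))

theorem card_add_card_toFinset_le_card_subSums₀ (hS : ZeroSumFree S) :
    Multiset.card S + S.toFinset.card ≤ (subSums₀ S).card := by
  induction S using Multiset.strongInductionOn with
  | ih S ih =>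
  rcases S.empty_or_exists_mem with rfl | ⟨a, ha⟩
  · simp
  have hlt := hS.card_subSums₀_erase_lt ha
  have hlen := Multiset.card_erase_add_one ha
  have hsupp := Finset.card_le_card (S.toFinset_subset_insert_toFinset_erase a)
  by_cases hrep : a ∈ S.erase a
  · rw [Finset.insert_eq_of_mem (Multiset.mem_toFinset.2 hrep)] at hsupp
    have := ih _ (Multiset.erase_lt.2 ha) (hS.mono (Multiset.erase_le a S))
    omega
  have hsupp' := hsupp.trans (Finset.card_insert_le _ _)
  rcases (S.erase a).empty_or_exists_mem with herase | ⟨b, hb⟩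
  · have := (subSums₀ (S.erase a)).card_pos.2 ⟨0, zero_mem_subSums₀ _⟩
    simp only [herase, Multiset.toFinset_zero, Finset.card_empty, Multiset.card_zero] at hsupp' hlen
    omega
  obtain ⟨c, hc, hcard⟩ := hS.exists_card_subSums₀_erase_add_two_le ha
    (Multiset.mem_of_mem_erase hb) fun hab => hrep (hab ▸ hb)
  have := ih _ (Multiset.erase_lt.2 hc) (hS.mono (Multiset.erase_le c S))
  have := Finset.card_le_card (S.toFinset_subset_insert_toFinset_erase c)
  have := Finset.card_insert_le c (S.erase c).toFinset
  have := Multiset.card_erase_add_one hc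
  omega

end ZeroSumFree

end AddCommGroup

end

theorem stmt0_general {G : Type*} [AddCommGroup G] [DecidableEq G]
    (S : Multiset G) (hS : (0 : G) ∉ subSums S) :
    (subSums S).ncard + 1 ≥ Multiset.card S + S.toFinset.card := by
  have hfin : (subSums S).Finite :=
    (subSums₀ S).finite_toSet.subset ((Set.subset_insert 0 _).trans (insert_zero_subSums S).le)
  rw [← Set.ncard_insert_of_notMem hS hfin, insert_zero_subSums, Set.ncard_coe_finset]
  exact (zeroSumFree_of_zero_notMem_subSums hS).card_add_card_toFinset_le_card_subSums₀

theorem stmt0 {G : Type*} [AddCommGroup G] [Fintype G] [DecidableEq G]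
    (S : Multiset G) (hS : (0 : G) ∉ subSums S) :
    (subSums S).ncard + 1 ≥ Multiset.card S + S.toFinset.card :=
  stmt0_general S hS
end

section
/- Let G be a finite abelian group and S a zero-sum free sequence over G. Then |Σ(S)| ≥ |S|, and equality holds if and only if S = g^{|S|} (the element g repeated |S| times) for some g ∈ G with ord(g) ≥ |S| + 1. -/
lemma my_le_cons_iff {α : Type*} {U T : Multiset α} {a : α} :
    U ≤ a ::ₘ T ↔ U ≤ T ∨ ∃ V, V ≤ T ∧ U = a ::ₘ V := by
  classical
  constructor
  · intro h
    by_cases ha : a ∈ U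
    · refine Or.inr ⟨U.erase a, ?_, (Multiset.cons_erase ha).symm⟩
      rw [← Multiset.cons_le_cons_iff a, Multiset.cons_erase ha]; exact h
    · left
      rw [Multiset.le_iff_count] at h ⊢
      intro b
      rcases eq_or_ne b a with rfl | hb
      · simp [Multiset.count_eq_zero_of_notMem ha]
      · simpa [Multiset.count_cons_of_ne hb] using h b
  · rintro (h | ⟨V, hV, rfl⟩)
    · exact h.trans (Multiset.le_cons_self _ _)
    · exact Multiset.cons_le_cons a hV

lemma subSums_mono {G : Type*} [AddCommMonoid G] {T S : Multiset G} (h : T ≤ S) :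
    subSums T ⊆ subSums S := by
  rintro x ⟨U, hU, hU0, rfl⟩
  exact ⟨U, hU.trans h, hU0, rfl⟩

lemma subSums_cons {G : Type*} [AddCommMonoid G] (a : G) (T : Multiset G) :
    subSums (a ::ₘ T) = subSums T ∪ (a + ·) '' (insert 0 (subSums T)) := by
  ext x
  simp only [subSums, Set.mem_setOf_eq, Set.mem_union, Set.mem_image, Set.mem_insert_iff]
  constructor
  · rintro ⟨U, hU, hU0, rfl⟩
    rcases my_le_cons_iff.1 hU with h | ⟨V, hV, rfl⟩
    · exact Or.inl ⟨U, h, hU0, rfl⟩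
    · right
      rcases eq_or_ne V 0 with rfl | hV0
      · exact ⟨0, Or.inl rfl, by simp⟩
      · exact ⟨V.sum, Or.inr ⟨V, hV, hV0, rfl⟩, by simp [Multiset.sum_cons]⟩
  · rintro (⟨U, hU, hU0, rfl⟩ | ⟨y, (rfl | ⟨V, hV, hV0, rfl⟩), rfl⟩)
    · exact ⟨U, hU.trans (Multiset.le_cons_self _ _), hU0, rfl⟩
    · exact ⟨{a}, by simpa using Multiset.cons_le_cons a (zero_le T), by simp, by simp⟩
    · exact ⟨a ::ₘ V, Multiset.cons_le_cons a hV, by simp, by simp [Multiset.sum_cons]⟩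

lemma subSums_replicate {G : Type*} [AddCommMonoid G] (n : ℕ) (g : G) :
    subSums (Multiset.replicate n g) = (fun k : ℕ => k • g) '' Set.Icc 1 n := by
  ext x
  simp only [subSums, Set.mem_setOf_eq, Set.mem_image, Set.mem_Icc]
  constructor
  · rintro ⟨U, hU, hU0, rfl⟩
    rcases Multiset.le_replicate_iff.1 hU with ⟨k, hk, rfl⟩
    have hk1 : 1 ≤ k := by
      rcases Nat.eq_zero_or_pos k with rfl | h
      · simp at hU0
      · exact h
    exact ⟨k, ⟨hk1, hk⟩, by simp [Multiset.sum_replicate]⟩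
  · rintro ⟨k, ⟨hk1, hkn⟩, rfl⟩
    refine ⟨Multiset.replicate k g, (Multiset.replicate_le_replicate g).2 hkn, ?_,
      by simp [Multiset.sum_replicate]⟩
    intro h
    have := congrArg Multiset.card h
    simp at this
    omega

lemma ncard_subSums_replicate {G : Type*} [AddCommGroup G] [Fintype G] {n : ℕ} {g : G}
    (hord : n + 1 ≤ addOrderOf g) :
    (subSums (Multiset.replicate n g)).ncard = n := by
  rw [subSums_replicate]
  have hinj : Set.InjOn (fun k : ℕ => k • g) (Set.Icc 1 n) := by
    intro i hi j hj hij
    simp only [Set.mem_Icc] at hi hj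
    exact nsmul_injOn_Iio_addOrderOf (Set.mem_Iio.2 (by omega)) (Set.mem_Iio.2 (by omega)) hij
  rw [Set.ncard_image_of_injOn hinj, ← Finset.coe_Icc, Set.ncard_coe_finset, Nat.card_Icc]
  omega

lemma main_ind {G : Type*} [AddCommGroup G] [Fintype G] (n : ℕ) :
    ∀ S : Multiset G, Multiset.card S = n → (0 : G) ∉ subSums S →
      n ≤ (subSums S).ncard ∧ ((subSums S).ncard = n →
        ∃ g : G, S = Multiset.replicate n g ∧ n + 1 ≤ addOrderOf g) := by
  induction n with
  | zero =>
    intro S hcard hS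
    rw [Multiset.card_eq_zero] at hcard
    subst hcard
    have he : subSums (0 : Multiset G) = ∅ := by
      ext x
      simp only [subSums, Set.mem_setOf_eq, Set.mem_empty_iff_false, iff_false]
      rintro ⟨T, hT, hT0, -⟩
      exact hT0 (Multiset.le_zero.1 hT)
    refine ⟨by simp [he], fun _ => ⟨0, by simp, ?_⟩⟩
    simp
  | succ n ih =>
    intro S hcard hS
    classical
    obtain ⟨a, ha⟩ := Multiset.card_pos_iff_exists_mem.1 (by rw [hcard]; omega)
    obtain ⟨T, rfl⟩ : ∃ T, S = a ::ₘ T := ⟨S.erase a, (Multiset.cons_erase ha).symm⟩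
    have hcT : Multiset.card T = n := by
      rw [Multiset.card_cons] at hcard; omega
    have hT0 : (0 : G) ∉ subSums T :=
      fun h => hS (subSums_mono (Multiset.le_cons_self T a) h)
    have ha0 : a ≠ 0 := by
      rintro rfl
      exact hS ⟨{0}, by simpa using Multiset.cons_le_cons 0 (zero_le T), by simp, by simp⟩
    set A : Set G := insert 0 (subSums T) with hAdef
    set B : Set G := (a + ·) '' A with hBdef
    have hBsub : B ⊆ subSums (a ::ₘ T) := by
      rw [subSums_cons]; exact Set.subset_union_right
    have h0B : (0 : G) ∉ B := fun h => hS (hBsub h)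
    -- key union identity
    have key : A ∪ B = insert 0 (subSums (a ::ₘ T)) := by
      rw [subSums_cons, hAdef, Set.insert_union]
    -- a + A is not contained in A
    have hnotsub : ¬ B ⊆ A := by
      intro hsub
      have hk : ∀ k : ℕ, (k • a) ∈ A := by
        intro k
        induction k with
        | zero => simp [hAdef]
        | succ k ihk =>
          have : a + k • a ∈ A := hsub ⟨k • a, ihk, rfl⟩
          have he : (k + 1) • a = a + k • a := by
            rw [succ_nsmul, add_comm]
          rwa [he]
      have hpos : 0 < addOrderOf a := addOrderOf_pos a
      have hne1 : addOrderOf a ≠ 1 := fun h => ha0 (AddMonoid.addOrderOf_eq_one_iff.1 h)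
      have hmem : ((addOrderOf a - 1) • a) ∈ A := hk _
      have hneg : (addOrderOf a - 1) • a = -a := by
        have h1 : (addOrderOf a - 1) • a + a = 0 := by
          rw [← succ_nsmul, Nat.sub_add_cancel (by omega)]
          exact addOrderOf_nsmul_eq_zero a
        exact eq_neg_of_add_eq_zero_left h1
      rw [hneg] at hmem
      rcases hmem with h0 | ⟨U, hU, hU0, hUs⟩
      · exact ha0 (by simpa [neg_eq_zero] using h0.symm)
      · exact hS ⟨a ::ₘ U, Multiset.cons_le_cons a hU, by simp,
          by rw [Multiset.sum_cons, hUs, add_neg_cancel]⟩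
    obtain ⟨b, hbB, hbA⟩ := Set.not_subset.1 hnotsub
    have hAcard : A.ncard = (subSums T).ncard + 1 :=
      Set.ncard_insert_of_notMem hT0 (Set.toFinite _)
    have hBcard : B.ncard = A.ncard :=
      Set.ncard_image_of_injective _ (add_right_injective a)
    have hABcard : (subSums (a ::ₘ T)).ncard + 1 = (A ∪ B).ncard := by
      rw [key, Set.ncard_insert_of_notMem hS (Set.toFinite _)]
    have hlow : A.ncard + 1 ≤ (A ∪ B).ncard := by
      rw [← Set.ncard_insert_of_notMem hbA (Set.toFinite _)]
      exact Set.ncard_le_ncard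
        (Set.insert_subset (Or.inr hbB) Set.subset_union_left) (Set.toFinite _)
    have hTlow : n ≤ (subSums T).ncard := (ih T hcT hT0).1
    constructor
    · omega
    intro heq
    -- equality analysis
    have hABeq : (A ∪ B).ncard = A.ncard + 1 := by
      have hup : (A ∪ B).ncard ≤ A.ncard + 1 := by omega
      omega
    have hTeq : (subSums T).ncard = n := by omega
    obtain ⟨h, hTrep, hordh⟩ := (ih T hcT hT0).2 hTeq
    rcases Nat.eq_zero_or_pos n with rfl | hn
    · -- singleton case
      have hT : T = 0 := by rwa [Multiset.replicate_zero] at hTrep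
      subst hT
      refine ⟨a, by simp, ?_⟩
      have hpos : 0 < addOrderOf a := addOrderOf_pos a
      have hne1 : addOrderOf a ≠ 1 := fun h => ha0 (AddMonoid.addOrderOf_eq_one_iff.1 h)
      omega
    -- n ≥ 1 case
    subst hTrep
    set m := addOrderOf h with hmdef
    have hm : n + 1 ≤ m := hordh
    have hA : A = (fun k : ℕ => k • h) '' Set.Iio (n + 1) := by
      rw [hAdef, subSums_replicate]
      ext x
      simp only [Set.mem_insert_iff, Set.mem_image, Set.mem_Icc, Set.mem_Iio]
      constructor
      · rintro (rfl | ⟨k, ⟨h1, h2⟩, rfl⟩)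
        · exact ⟨0, by omega, by simp⟩
        · exact ⟨k, by omega, rfl⟩
      · rintro ⟨k, hk, rfl⟩
        rcases Nat.eq_zero_or_pos k with rfl | hkpos
        · exact Or.inl (by simp)
        · exact Or.inr ⟨k, ⟨hkpos, by omega⟩, rfl⟩
    -- get that a is a multiple of h
    have hdiff1 : (B \ A).ncard = 1 := by
      have hdisj : Disjoint A (B \ A) := Set.disjoint_sdiff_right
      have hU : A ∪ (B \ A) = A ∪ B := Set.union_diff_self
      have := Set.ncard_union_eq hdisj (Set.toFinite _) (Set.toFinite _)
      rw [hU, hABeq] at this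
      omega
    have hinter : (B ∩ A).ncard = n := by
      have := Set.ncard_inter_add_ncard_diff_eq_ncard B A (Set.toFinite _)
      omega
    have hBApos : (B ∩ A).Nonempty := by
      rw [← Set.ncard_pos (Set.toFinite _), hinter]; omega
    obtain ⟨x, hxB, hxA⟩ := hBApos
    rw [hA] at hxA
    obtain ⟨j, hj, hjx⟩ := hxA
    rw [hBdef, hA] at hxB
    obtain ⟨y, ⟨i, hi, rfl⟩, hix⟩ := hxB
    -- a + i • h = j • h
    simp only [Set.mem_Iio] at hi hj
    have haij : a = j • h + (m - i) • h := by
      have him : i ≤ m := by omega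
      have h1 : (m - i) • h + i • h = 0 := by
        rw [← add_nsmul, Nat.sub_add_cancel him, hmdef]
        exact addOrderOf_nsmul_eq_zero h
      have hnegih : (m - i) • h = -(i • h) := eq_neg_of_add_eq_zero_left h1
      have h2 : a + i • h = j • h := hix.trans hjx.symm
      rw [hnegih, ← sub_eq_add_neg]
      exact eq_sub_of_add_eq h2
    set c := (j + (m - i)) % m with hcdef
    have hmpos : 0 < m := by omega
    have hc : c • h = a := by
      have hmod := mod_addOrderOf_nsmul h (j + (m - i))
      rw [← hmdef] at hmod
      rw [hcdef, hmod, add_nsmul, ← haij]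
    have hcm : c < m := Nat.mod_lt _ hmpos
    have hc0 : c ≠ 0 := by
      intro h0
      exact ha0 (by rw [← hc, h0, zero_nsmul])
    set I : Set ℕ := (fun i : ℕ => (c + i) % m) '' Set.Iio (n + 1) with hIdef
    have hB : B = (fun k : ℕ => k • h) '' I := by
      rw [hBdef, hA, hIdef, ← Set.image_comp, ← Set.image_comp]
      apply Set.image_congr
      intro k _
      show a + k • h = ((c + k) % m) • h
      have hmod := mod_addOrderOf_nsmul h (c + k)
      rw [← hmdef] at hmod
      rw [hmod, add_nsmul, hc]
    have hinjm : Set.InjOn (fun k : ℕ => k • h) (Set.Iio m) := by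
      rw [hmdef]; exact nsmul_injOn_Iio_addOrderOf
    have hIsub : I ⊆ Set.Iio m := by
      rintro _ ⟨k, _, rfl⟩
      exact Nat.mod_lt _ hmpos
    have hIio_sub : Set.Iio (n + 1) ⊆ Set.Iio m := Set.Iio_subset_Iio hm
    have hIinj : Set.InjOn (fun i : ℕ => (c + i) % m) (Set.Iio (n + 1)) := by
      intro p hp q hq hpq
      simp only [Set.mem_Iio] at hp hq
      have h2 : p % m = q % m := Nat.ModEq.add_left_cancel' c hpq
      rwa [Nat.mod_eq_of_lt (by omega), Nat.mod_eq_of_lt (by omega)] at h2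
    have hIcard : I.ncard = n + 1 := by
      rw [hIdef, Set.ncard_image_of_injOn hIinj, ← Finset.coe_Iio,
        Set.ncard_coe_finset, Nat.card_Iio]
    have h0I : (0 : ℕ) ∉ I := by
      intro h0
      exact hS (hBsub (by rw [hB]; exact ⟨0, h0, by simp⟩))
    have hdiffeq : B \ A = (fun k : ℕ => k • h) '' (I \ Set.Iio (n + 1)) := by
      rw [hB, hA]
      ext x
      constructor
      · rintro ⟨⟨k, hkI, rfl⟩, hxA⟩
        exact ⟨k, ⟨hkI, fun hk => hxA ⟨k, hk, rfl⟩⟩, rfl⟩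
      · rintro ⟨k, ⟨hkI, hkn⟩, rfl⟩
        refine ⟨⟨k, hkI, rfl⟩, ?_⟩
        rintro ⟨l, hl, hlk⟩
        exact hkn (by rwa [hinjm (hIio_sub hl) (hIsub hkI) hlk] at hl)
    have hd2 : (I \ Set.Iio (n + 1)).ncard = 1 := by
      rw [hdiffeq] at hdiff1
      rwa [Set.ncard_image_of_injOn (hinjm.mono (fun k hk => hIsub hk.1))] at hdiff1
    have hIfin : I.Finite := ((Set.finite_Iio (n + 1)).image _)
    have hIin : (I ∩ Set.Iio (n + 1)).ncard = n := by
      have := Set.ncard_inter_add_ncard_diff_eq_ncard I (Set.Iio (n + 1)) hIfin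
      omega
    have hdio : (Set.Iio (n + 1) \ I).ncard = 1 := by
      have h1 := Set.ncard_inter_add_ncard_diff_eq_ncard (Set.Iio (n + 1)) I
        (Set.finite_Iio (n + 1))
      have h2 : (Set.Iio (n + 1) ∩ I).ncard = (I ∩ Set.Iio (n + 1)).ncard := by
        rw [Set.inter_comm]
      have h3 : (Set.Iio (n + 1) : Set ℕ).ncard = n + 1 := by
        rw [← Finset.coe_Iio, Set.ncard_coe_finset, Nat.card_Iio]
      omega
    have hzero_mem : (0 : ℕ) ∈ Set.Iio (n + 1) \ I := ⟨by simp, h0I⟩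
    obtain ⟨z, hz⟩ := Set.ncard_eq_one.1 hdio
    have hz0 : Set.Iio (n + 1) \ I = {0} := by
      rw [hz] at hzero_mem ⊢
      simp only [Set.mem_singleton_iff] at hzero_mem
      rw [← hzero_mem]
    have hksub : ∀ k, 1 ≤ k → k ≤ n → k ∈ I := by
      intro k h1 h2
      by_contra hk
      have hmem : k ∈ Set.Iio (n + 1) \ I := ⟨by simp; omega, hk⟩
      rw [hz0] at hmem
      simp only [Set.mem_singleton_iff] at hmem
      omega
    have hwrap : c + n < m := by
      by_contra hcon
      push_neg at hcon
      refine h0I ⟨m - c, by simp; omega, ?_⟩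
      show (c + (m - c)) % m = 0
      rw [Nat.add_sub_cancel' (le_of_lt hcm), Nat.mod_self]
    obtain ⟨i1, hi1, hi1e⟩ := hksub 1 le_rfl hn
    simp only [Set.mem_Iio] at hi1
    have hlt : c + i1 < m := by omega
    have hi1e' : (c + i1) % m = 1 := hi1e
    have hc1 : c + i1 = 1 := by rwa [Nat.mod_eq_of_lt hlt] at hi1e'
    have hceq : c = 1 := by omega
    refine ⟨h, ?_, by omega⟩
    have hah : a = h := by rw [← hc, hceq, one_nsmul]
    rw [hah, Multiset.replicate_succ]

theorem stmt1 {G : Type*} [AddCommGroup G] [Fintype G]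
    (S : Multiset G) (hS : (0 : G) ∉ subSums S) :
    (subSums S).ncard ≥ Multiset.card S ∧
      ((subSums S).ncard = Multiset.card S ↔
        ∃ g : G, S = Multiset.replicate (Multiset.card S) g ∧
          Multiset.card S + 1 ≤ addOrderOf g) := by
  obtain ⟨h1, h2⟩ := main_ind (Multiset.card S) S rfl hS
  refine ⟨h1, h2, ?_⟩
  rintro ⟨g, hrep, hord⟩
  obtain ⟨n, hn⟩ : ∃ n, Multiset.card S = n := ⟨_, rfl⟩
  rw [hn] at hrep hord ⊢
  subst hrep
  exact ncard_subSums_replicate hord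
end

section
/- Let G be a finite abelian group and S = {g₁, g₂, g₃} a zero-sum free subset of G with three distinct elements. Then either |Σ(S)| ≥ 6, or S has the form {g₁, g₂, g₁+g₂} with g₁, g₂ ∈ G∖{0}, 2g₂ = 0, 2g₁ ≠ 0, and 2g₁ + g₂ ≠ 0; in the latter case Σ(S) = {g₁, g₂, g₁+g₂, 2g₁, 2g₁+g₂} and |Σ(S)| = 5. -/
lemma le_cons_cases {α : Type*} [DecidableEq α] {T : Multiset α} {a : α} {s : Multiset α}
    (h : T ≤ a ::ₘ s) : T ≤ s ∨ ∃ T', T' ≤ s ∧ T = a ::ₘ T' := by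
  by_cases m : a ∈ T
  · exact Or.inr ⟨T.erase a, Multiset.erase_le_iff_le_cons.2 h, (Multiset.cons_erase m).symm⟩
  · exact Or.inl ((Multiset.le_cons_of_notMem m).1 h)

lemma subSums_triple {G : Type*} [AddCommGroup G] [DecidableEq G] (a b c : G) :
    subSums (a ::ₘ b ::ₘ {c} : Multiset G) =
      {a, b, c, a + b, a + c, b + c, a + b + c} := by
  have sing : ∀ (T : Multiset G) (x : G), T ≤ {x} → T = 0 ∨ T = {x} :=
    fun T x h => Multiset.le_singleton.1 h
  ext x
  constructor
  · rintro ⟨T, hT, hT0, rfl⟩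
    rcases le_cons_cases hT with h | ⟨T1, h1, rfl⟩
    · rcases le_cons_cases h with h | ⟨T2, h2, rfl⟩
      · rcases sing _ _ h with rfl | rfl
        · exact absurd rfl hT0
        · simp
      · rcases sing _ _ h2 with rfl | rfl <;> simp
    · rcases le_cons_cases h1 with h | ⟨T2, h2, rfl⟩
      · rcases sing _ _ h with rfl | rfl <;> simp
      · rcases sing _ _ h2 with rfl | rfl <;> simp [Set.mem_insert_iff, add_assoc]
  · intro hx
    simp only [Set.mem_insert_iff, Set.mem_singleton_iff] at hx
    have lbc : ({c} : Multiset G) ≤ b ::ₘ {c} := Multiset.le_cons_self _ _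
    rcases hx with h|h|h|h|h|h|h
    · exact ⟨{a}, Multiset.cons_le_cons _ (Multiset.zero_le _), by simp, by simp [h]⟩
    · exact ⟨{b}, le_trans (Multiset.cons_le_cons _ (Multiset.zero_le _))
        (Multiset.le_cons_self _ _), by simp, by simp [h]⟩
    · exact ⟨{c}, le_trans lbc (Multiset.le_cons_self _ _), by simp, by simp [h]⟩
    · exact ⟨a ::ₘ {b}, Multiset.cons_le_cons _ (Multiset.cons_le_cons _ (Multiset.zero_le _)),
        by simp, by simp [h]⟩
    · exact ⟨a ::ₘ {c}, Multiset.cons_le_cons _ lbc, by simp, by simp [h]⟩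
    · exact ⟨b ::ₘ {c}, Multiset.le_cons_self _ _, by simp, by simp [h]⟩
    · exact ⟨a ::ₘ b ::ₘ {c}, le_refl _, by simp, by simp [h, add_assoc]⟩

lemma finset_val_triple {G : Type*} [DecidableEq G] {a b c : G}
    (hab : a ≠ b) (hac : a ≠ c) (hbc : b ≠ c) :
    (({a, b, c} : Finset G)).val = (a ::ₘ b ::ₘ {c}) := by
  simp [Finset.insert_val, Multiset.ndinsert_of_notMem, hab, hac, hbc]

lemma trip_swap12 {G : Type*} (x y z : G) :
    (x ::ₘ y ::ₘ {z} : Multiset G) = y ::ₘ x ::ₘ {z} := Multiset.cons_swap _ _ _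

lemma trip_swap23 {G : Type*} (x y z : G) :
    (x ::ₘ y ::ₘ {z} : Multiset G) = x ::ₘ z ::ₘ {y} := by
  rw [← Multiset.cons_zero z, ← Multiset.cons_zero y, Multiset.cons_swap y z 0]

lemma six_le {α : Type*} [Finite α] {s : Set α} {x1 x2 x3 x4 x5 x6 : α}
    (m1 : x1 ∈ s) (m2 : x2 ∈ s) (m3 : x3 ∈ s) (m4 : x4 ∈ s) (m5 : x5 ∈ s) (m6 : x6 ∈ s)
    (d12 : x1 ≠ x2) (d13 : x1 ≠ x3) (d14 : x1 ≠ x4) (d15 : x1 ≠ x5) (d16 : x1 ≠ x6)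
    (d23 : x2 ≠ x3) (d24 : x2 ≠ x4) (d25 : x2 ≠ x5) (d26 : x2 ≠ x6)
    (d34 : x3 ≠ x4) (d35 : x3 ≠ x5) (d36 : x3 ≠ x6)
    (d45 : x4 ≠ x5) (d46 : x4 ≠ x6) (d56 : x5 ≠ x6) : 6 ≤ s.ncard := by
  have hsub : ({x1, x2, x3, x4, x5, x6} : Set α) ⊆ s := by
    intro y hy
    simp only [Set.mem_insert_iff, Set.mem_singleton_iff] at hy
    rcases hy with rfl|rfl|rfl|rfl|rfl|rfl <;> assumption
  have hc : ({x1, x2, x3, x4, x5, x6} : Set α).ncard = 6 := by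
    rw [Set.ncard_insert_of_notMem (by simp [d12, d13, d14, d15, d16]),
        Set.ncard_insert_of_notMem (by simp [d23, d24, d25, d26]),
        Set.ncard_insert_of_notMem (by simp [d34, d35, d36]),
        Set.ncard_insert_of_notMem (by simp [d45, d46]),
        Set.ncard_insert_of_notMem (by simp [d56]),
        Set.ncard_singleton]
  exact hc ▸ Set.ncard_le_ncard hsub (Set.toFinite s)

lemma exc_main {G : Type*} [AddCommGroup G] (h₁ h₂ : G)
    (hne : h₁ ≠ h₂) (h₁0 : h₁ ≠ 0) (h₂0 : h₂ ≠ 0) (hs0 : h₁ + h₂ ≠ 0)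
    (h2h₂ : 2 • h₂ = 0) (h2h₁ : 2 • h₁ ≠ 0) (hx0 : 2 • h₁ + h₂ ≠ 0) :
    ({h₁, h₂, h₁ + h₂, h₁ + h₂, h₁ + (h₁ + h₂), h₂ + (h₁ + h₂),
        h₁ + h₂ + (h₁ + h₂)} : Set G) = {h₁, h₂, h₁ + h₂, 2 • h₁, 2 • h₁ + h₂} ∧
      ({h₁, h₂, h₁ + h₂, 2 • h₁, 2 • h₁ + h₂} : Set G).ncard = 5 := by
  have e1 : h₁ + (h₁ + h₂) = 2 • h₁ + h₂ := by abel
  have e2 : h₂ + (h₁ + h₂) = h₁ := by linear_combination (norm := module) h2h₂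
  have e3 : h₁ + h₂ + (h₁ + h₂) = 2 • h₁ := by linear_combination (norm := module) h2h₂
  have d13 : h₁ ≠ h₁ + h₂ := fun h => h₂0 (by linear_combination (norm := module) -h)
  have d14 : h₁ ≠ 2 • h₁ := fun h => h₁0 (by linear_combination (norm := module) -h)
  have d15 : h₁ ≠ 2 • h₁ + h₂ := fun h => hs0 (by linear_combination (norm := module) -h)
  have d23 : h₂ ≠ h₁ + h₂ := fun h => h₁0 (by linear_combination (norm := module) -h)
  have d24 : h₂ ≠ 2 • h₁ := fun h => hx0 (by linear_combination (norm := module) h2h₂ - h)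
  have d25 : h₂ ≠ 2 • h₁ + h₂ := fun h => h2h₁ (by linear_combination (norm := module) -h)
  have d34 : h₁ + h₂ ≠ 2 • h₁ := fun h => hne (by linear_combination (norm := module) -h)
  have d35 : h₁ + h₂ ≠ 2 • h₁ + h₂ := fun h => h₁0 (by linear_combination (norm := module) -h)
  have d45 : 2 • h₁ ≠ 2 • h₁ + h₂ := fun h => h₂0 (by linear_combination (norm := module) -h)
  constructor
  · rw [e1, e2, e3]
    ext x
    simp only [Set.mem_insert_iff, Set.mem_singleton_iff]
    tauto
  · rw [Set.ncard_insert_of_notMem (by simp [hne, d13, d14, d15]) (Set.toFinite _),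
        Set.ncard_insert_of_notMem (by simp [d23, d24, d25]) (Set.toFinite _),
        Set.ncard_insert_of_notMem (by simp [d34, d35]) (Set.toFinite _),
        Set.ncard_insert_of_notMem (by simp [d45]) (Set.toFinite _),
        Set.ncard_singleton]

theorem stmt4 {G : Type*} [AddCommGroup G] [Fintype G] [DecidableEq G]
    (g₁ g₂ g₃ : G) (h12 : g₁ ≠ g₂) (h13 : g₁ ≠ g₃) (h23 : g₂ ≠ g₃)
    (S : Finset G) (hS : S = {g₁, g₂, g₃}) (h0 : (0 : G) ∉ subSums S.val) :
    6 ≤ (subSums S.val).ncard ∨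
      ∃ h₁ h₂ : G, h₁ ≠ 0 ∧ h₂ ≠ 0 ∧ 2 • h₂ = 0 ∧ 2 • h₁ ≠ 0 ∧ 2 • h₁ + h₂ ≠ 0 ∧
        S = ({h₁, h₂, h₁ + h₂} : Finset G) ∧
        subSums S.val = ({h₁, h₂, h₁ + h₂, 2 • h₁, 2 • h₁ + h₂} : Set G) ∧
        (subSums S.val).ncard = 5 := by
  have hval : S.val = (g₁ ::ₘ g₂ ::ₘ {g₃}) := by
    rw [hS]; exact finset_val_triple h12 h13 h23
  have hSig : subSums S.val = ({g₁, g₂, g₃, g₁ + g₂, g₁ + g₃, g₂ + g₃,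
      g₁ + g₂ + g₃} : Set G) := by rw [hval]; exact subSums_triple g₁ g₂ g₃
  rw [hSig] at h0
  simp only [Set.mem_insert_iff, Set.mem_singleton_iff, not_or] at h0
  obtain ⟨n1, n2, n3, n4, n5, n6, n7⟩ := h0
  have na : g₁ ≠ 0 := fun h => n1 h.symm
  have nb : g₂ ≠ 0 := fun h => n2 h.symm
  have nc : g₃ ≠ 0 := fun h => n3 h.symm
  have nab : g₁ + g₂ ≠ 0 := fun h => n4 h.symm
  have nac : g₁ + g₃ ≠ 0 := fun h => n5 h.symm
  have nbc : g₂ + g₃ ≠ 0 := fun h => n6 h.symm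
  have ns : g₁ + g₂ + g₃ ≠ 0 := fun h => n7 h.symm
  have mem : ∀ x ∈ ({g₁, g₂, g₃, g₁ + g₂, g₁ + g₃, g₂ + g₃, g₁ + g₂ + g₃} : Set G),
      x ∈ subSums S.val := fun x hx => hSig ▸ hx
  by_cases h1 : g₁ + g₂ = g₃ <;> by_cases h2 : g₁ + g₃ = g₂ <;> by_cases h3 : g₂ + g₃ = g₁
  · -- (T,T,T): contradiction
    exfalso
    have p2a : 2 • g₁ = 0 := by linear_combination (norm := module) h1 + h2
    have p2b : 2 • g₂ = 0 := by linear_combination (norm := module) h1 + h3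
    exact ns (by linear_combination (norm := module) p2a + p2b - h1)
  · -- (T,T,F): exceptional with h₁ = g₂, h₂ = g₁
    right
    have p2a : 2 • g₁ = 0 := by linear_combination (norm := module) h1 + h2
    have h2h₁ : 2 • g₂ ≠ 0 := fun hm => h3 (by linear_combination (norm := module) hm - h1)
    have hx0 : 2 • g₂ + g₁ ≠ 0 := fun h => nbc (by linear_combination (norm := module) h - h1)
    have hs0 : g₂ + g₁ ≠ 0 := fun h => nab (by linear_combination (norm := module) h)
    have hg3 : g₃ = g₂ + g₁ := by linear_combination (norm := module) -h1
    have Sval2 : S.val = (g₂ ::ₘ g₁ ::ₘ {g₂ + g₁}) := by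
      rw [hval, hg3, trip_swap12]
    obtain ⟨hset, hcard⟩ := exc_main g₂ g₁ h12.symm nb na hs0 p2a h2h₁ hx0
    refine ⟨g₂, g₁, nb, na, p2a, h2h₁, hx0, ?_, ?_, ?_⟩
    · rw [Finset.val_inj.symm, Sval2, finset_val_triple h12.symm
        (fun h => na (by linear_combination (norm := module) -h))
        (fun h => nb (by linear_combination (norm := module) -h))]
    · rw [Sval2, subSums_triple]; exact hset
    · rw [Sval2, subSums_triple, hset]; exact hcard
  · -- (T,F,T): exceptional with h₁ = g₁, h₂ = g₂
    right
    have p2b : 2 • g₂ = 0 := by linear_combination (norm := module) h1 + h3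
    have h2h₁ : 2 • g₁ ≠ 0 := fun hm => h2 (by linear_combination (norm := module) hm - h1)
    have hx0 : 2 • g₁ + g₂ ≠ 0 := fun h => nac (by linear_combination (norm := module) h - h1)
    have Sval2 : S.val = (g₁ ::ₘ g₂ ::ₘ {g₁ + g₂}) := by rw [hval, ← h1]
    obtain ⟨hset, hcard⟩ := exc_main g₁ g₂ h12 na nb nab p2b h2h₁ hx0
    refine ⟨g₁, g₂, na, nb, p2b, h2h₁, hx0, ?_, ?_, ?_⟩
    · rw [Finset.val_inj.symm, Sval2, finset_val_triple h12
        (fun h => nb (by linear_combination (norm := module) -h))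
        (fun h => na (by linear_combination (norm := module) -h))]
    · rw [Sval2, subSums_triple]; exact hset
    · rw [Sval2, subSums_triple, hset]; exact hcard
  · -- (T,F,F): use {a, b, c, a+c, b+c, s}
    left
    refine six_le (mem g₁ (by simp)) (mem g₂ (by simp)) (mem g₃ (by simp))
      (mem (g₁ + g₃) (by simp)) (mem (g₂ + g₃) (by simp)) (mem (g₁ + g₂ + g₃) (by simp))
      h12 h13 (fun h => nc (by linear_combination (norm := module) -h))
      (fun h => h3 h.symm) (fun h => nbc (by linear_combination (norm := module) -h))
      h23 (fun h => h2 h.symm) (fun h => nc (by linear_combination (norm := module) -h))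
      (fun h => nac (by linear_combination (norm := module) -h))
      (fun h => na (by linear_combination (norm := module) -h))
      (fun h => nb (by linear_combination (norm := module) -h))
      (fun h => nab (by linear_combination (norm := module) -h))
      (fun h => h12 (by linear_combination (norm := module) h))
      (fun h => nb (by linear_combination (norm := module) -h))
      (fun h => na (by linear_combination (norm := module) -h))
  · -- (F,T,T): exceptional with h₁ = g₁, h₂ = g₃
    right
    have p2c : 2 • g₃ = 0 := by linear_combination (norm := module) h2 + h3
    have h2h₁ : 2 • g₁ ≠ 0 := fun hm => h1 (by linear_combination (norm := module) hm - h2)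
    have hx0 : 2 • g₁ + g₃ ≠ 0 := fun h => nab (by linear_combination (norm := module) h - h2)
    have Sval2 : S.val = (g₁ ::ₘ g₃ ::ₘ {g₁ + g₃}) := by
      rw [hval, show g₂ = g₁ + g₃ from h2.symm, trip_swap23]
    obtain ⟨hset, hcard⟩ := exc_main g₁ g₃ h13 na nc nac p2c h2h₁ hx0
    refine ⟨g₁, g₃, na, nc, p2c, h2h₁, hx0, ?_, ?_, ?_⟩
    · rw [Finset.val_inj.symm, Sval2, finset_val_triple h13
        (fun h => nc (by linear_combination (norm := module) -h))
        (fun h => na (by linear_combination (norm := module) -h))]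
    · rw [Sval2, subSums_triple]; exact hset
    · rw [Sval2, subSums_triple, hset]; exact hcard
  · -- (F,T,F): use {a, b, c, a+b, b+c, s}
    left
    refine six_le (mem g₁ (by simp)) (mem g₂ (by simp)) (mem g₃ (by simp))
      (mem (g₁ + g₂) (by simp)) (mem (g₂ + g₃) (by simp)) (mem (g₁ + g₂ + g₃) (by simp))
      h12 h13 (fun h => nb (by linear_combination (norm := module) -h))
      (fun h => h3 h.symm) (fun h => nbc (by linear_combination (norm := module) -h))
      h23 (fun h => na (by linear_combination (norm := module) -h))
      (fun h => nc (by linear_combination (norm := module) -h))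
      (fun h => nac (by linear_combination (norm := module) -h))
      (fun h => h1 h.symm) (fun h => nb (by linear_combination (norm := module) -h))
      (fun h => nab (by linear_combination (norm := module) -h))
      (fun h => h13 (by linear_combination (norm := module) h))
      (fun h => nc (by linear_combination (norm := module) -h))
      (fun h => na (by linear_combination (norm := module) -h))
  all_goals
    -- (F,F,T) and (F,F,F): use {a, b, c, a+b, a+c, s}
    left
    refine six_le (mem g₁ (by simp)) (mem g₂ (by simp)) (mem g₃ (by simp))
      (mem (g₁ + g₂) (by simp)) (mem (g₁ + g₃) (by simp)) (mem (g₁ + g₂ + g₃) (by simp))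
      h12 h13 (fun h => nb (by linear_combination (norm := module) -h))
      (fun h => nc (by linear_combination (norm := module) -h))
      (fun h => nbc (by linear_combination (norm := module) -h))
      h23 (fun h => na (by linear_combination (norm := module) -h))
      (fun h => h2 h.symm) (fun h => nac (by linear_combination (norm := module) -h))
      (fun h => h1 h.symm) (fun h => na (by linear_combination (norm := module) -h))
      (fun h => nab (by linear_combination (norm := module) -h))
      (fun h => h23 (by linear_combination (norm := module) h))
      (fun h => nc (by linear_combination (norm := module) -h))
      (fun h => nb (by linear_combination (norm := module) -h))
end

section
/- Let n ≥ 7 be odd and G = ⟨g⟩ a cyclic group of order n. Let S = 0^{n−3}·g^{n−3}·(2g)·((n−1)g). Then |S| = 2n − 4, 0 ∉ Σ_n(S), Σ_n(S) = {g, 2g, …, (n−1)g}, and |Σ_n(S)| = n − 1. -/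
/-! Since `(n - 1) • g = -g`, a subsequence of length `n` consists of `a ≤ n - 3` zeros,
`b ≤ n - 3` copies of `g`, `c ≤ 1` copies of `2 • g` and `d ≤ 1` copies of `-g`, with sum
`(b + 2c - d) • g`. The length constraint forces `1 ≤ b + 2c - d ≤ n - 1`, and every such value
is attained. As `g` has order `n`, the multiples `g, …, (n - 1) • g` are nonzero and distinct. -/

open Multiset

theorem Multiset.exists_add_of_le_add {α : Type*} {s t u : Multiset α} (h : s ≤ t + u) :
    ∃ s₁ ≤ t, ∃ s₂ ≤ u, s = s₁ + s₂ := by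
  classical
  exact ⟨s ∩ t, inter_le_right, s - t, Multiset.sub_le_iff_le_add.2 (add_comm t u ▸ h),
    by rw [add_comm, sub_add_inter]⟩

section AddCommMonoid

variable {G : Type*} [AddCommMonoid G]

theorem mem_sumsLen_add {k : ℕ} {A B : Multiset G} {x : G} :
    x ∈ sumsLen k (A + B) ↔
      ∃ i j, i + j = k ∧ ∃ a ∈ sumsLen i A, ∃ b ∈ sumsLen j B, a + b = x := by
  constructor
  · rintro ⟨T, hT, rfl, rfl⟩
    obtain ⟨T₁, h₁, T₂, h₂, rfl⟩ := exists_add_of_le_add hT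
    exact ⟨_, _, (card_add T₁ T₂).symm, _, ⟨T₁, h₁, rfl, rfl⟩, _, ⟨T₂, h₂, rfl, rfl⟩,
      (sum_add T₁ T₂).symm⟩
  · rintro ⟨_, _, rfl, _, ⟨T₁, h₁, rfl, rfl⟩, _, ⟨T₂, h₂, rfl, rfl⟩, rfl⟩
    exact ⟨T₁ + T₂, add_le_add h₁ h₂, card_add T₁ T₂, sum_add T₁ T₂⟩

theorem mem_sumsLen_replicate {k m : ℕ} {y x : G} :
    x ∈ sumsLen k (replicate m y) ↔ k ≤ m ∧ k • y = x := by
  constructor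
  · rintro ⟨T, hT, rfl, rfl⟩
    obtain ⟨j, hj, rfl⟩ := le_replicate_iff.1 hT
    simp [hj]
  · rintro ⟨hk, rfl⟩
    exact ⟨replicate k y, (replicate_le_replicate y).2 hk, card_replicate k y, sum_replicate k y⟩

end AddCommMonoid

theorem sumsLen_replicate_zero_add_replicate_add_pair {G : Type*} [AddCommGroup G] {n : ℕ}
    (hn : 7 ≤ n) (g : G) :
    sumsLen n (replicate (n - 3) 0 + replicate (n - 3) g + {2 • g, -g}) =
      (· • g) '' Set.Icc 1 (n - 1) := by
  have hpair : ({2 • g, -g} : Multiset G) = replicate 1 (2 • g) + replicate 1 (-g) := rfl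
  ext x
  rw [hpair, ← add_assoc]
  simp only [mem_sumsLen_add, mem_sumsLen_replicate, smul_zero, smul_neg, ↓existsAndEq,
    true_and, and_true, zero_add, Set.mem_image, Set.mem_Icc]
  constructor
  · rintro ⟨d, c, a, b, hcard, ⟨⟨ha, hb⟩, hc⟩, hd, rfl⟩
    refine ⟨b + 2 * c - d, by omega, ?_⟩
    rw [← natCast_zsmul, Nat.cast_sub (by omega)]
    push_cast
    module
  · rintro ⟨i, ⟨hi₁, hi₂⟩, rfl⟩
    by_cases hi : i ≤ n - 4
    · refine ⟨1, 0, n - 2 - i, i + 1, by omega, by omega, le_rfl, ?_⟩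
      module
    · refine ⟨0, 1, n + 1 - i, i - 2, by omega, by omega, zero_le_one, ?_⟩
      rw [zero_smul, neg_zero, add_zero, one_smul, ← add_nsmul, Nat.sub_add_cancel (by omega)]

theorem stmt11_general {G : Type*} [AddCommGroup G]
    (n : ℕ) (hn : 7 ≤ n)
    (g : G) (hord : addOrderOf g = n)
    (S : Multiset G)
    (hS : S = Multiset.replicate (n - 3) (0 : G) + Multiset.replicate (n - 3) g +
      {2 • g, (n - 1) • g}) :
    Multiset.card S = 2 * n - 4 ∧ (0 : G) ∉ sumsLen n S ∧
      sumsLen n S = {x : G | ∃ i : ℕ, 1 ≤ i ∧ i ≤ n - 1 ∧ x = i • g} ∧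
      (sumsLen n S).ncard = n - 1 := by
  have hneg : (n - 1) • g = -g := by
    rw [eq_neg_iff_add_eq_zero, ← succ_nsmul, Nat.sub_add_cancel (by omega), ← hord,
      addOrderOf_nsmul_eq_zero]
  have hsums : sumsLen n S = (· • g) '' Set.Icc 1 (n - 1) := by
    rw [hS, hneg, sumsLen_replicate_zero_add_replicate_add_pair hn]
  have hinj : Set.InjOn (· • g) (Set.Icc 1 (n - 1)) :=
    nsmul_injOn_Iio_addOrderOf.mono fun i hi ↦ by
      rw [Set.mem_Iio, hord]; exact hi.2.trans_lt (by omega)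
  refine ⟨by simp [hS]; omega, ?_, ?_, ?_⟩
  · rw [hsums]
    rintro ⟨i, ⟨hi₁, hi₂⟩, hi⟩
    exact nsmul_ne_zero_of_lt_addOrderOf (by omega) (by omega) hi
  · rw [hsums]
    ext x
    simp [eq_comm, and_assoc]
  · rw [hsums, hinj.ncard_image, ← Finset.coe_Icc, Set.ncard_coe_finset, Nat.card_Icc]
    omega

theorem stmt11 {G : Type*} [AddCommGroup G] [Fintype G] [DecidableEq G]
    (n : ℕ) (hn : 7 ≤ n) (hodd : Odd n)
    (g : G) (hcard : Fintype.card G = n) (hord : addOrderOf g = n)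
    (S : Multiset G)
    (hS : S = Multiset.replicate (n - 3) (0 : G) + Multiset.replicate (n - 3) g +
      {2 • g, (n - 1) • g}) :
    Multiset.card S = 2 * n - 4 ∧ (0 : G) ∉ sumsLen n S ∧
      sumsLen n S = {x : G | ∃ i : ℕ, 1 ≤ i ∧ i ≤ n - 1 ∧ x = i • g} ∧
      (sumsLen n S).ncard = n - 1 :=
  stmt11_general n hn g hord S hS
end

section
/- Let n ≥ 7 be odd and G = ⟨g⟩ a cyclic group of order n. Let S = 0^{n−3}·g^{n−3}·(2g)·((n−1)g) and r = n − 4. Then for every zero-sum free sequence T over G with |T| = r + 1, either |Σ_n(S)| < |Σ(T)| or |supp(T)| < min{r+1, |supp(S)| − 1}. -/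
/-! A zero-sum free sequence `T` over a finite abelian group satisfies
`|Σ(T)| ≤ |G| - 1`, and `|Σ(UV)| ≥ |Σ(U)| + |Σ(V)|` whenever `UV` is zero-sum free, since
`Σ(U)` and `σ(U) + Σ(V)` are disjoint subsets of `Σ(UV)`. Hence `|Σ(T)| ≥ |T|`, and if
`T` contains three distinct elements `a, b, c` then, in a group without elements of order
two, `|Σ(abc)| ≥ 6` gives `|Σ(T)| ≥ |T| + 3`, so `|T| ≤ |G| - 4`. For `|T| = n - 3` this
forces `|supp(T)| ≤ 2 < 3 ≤ min(n - 3, |supp(S)| - 1)`. -/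

section SubSums

open scoped Pointwise

variable {G : Type*} [AddCommGroup G]

lemma sum_mem_subSums {U W : Multiset G} (hW : W ≤ U) (hW0 : W ≠ 0) : W.sum ∈ subSums U :=
  ⟨W, hW, hW0, rfl⟩

lemma sum_ne_zero_of_le {U W : Multiset G} (h : (0 : G) ∉ subSums U) (hW : W ≤ U)
    (hW0 : W ≠ 0) : W.sum ≠ 0 :=
  fun hsum => h (hsum ▸ sum_mem_subSums hW hW0)

lemma subSums_mono_s12 {U V : Multiset G} (h : U ≤ V) : subSums U ⊆ subSums V :=
  fun _ ⟨W, hWU, hW0, hWx⟩ => ⟨W, hWU.trans h, hW0, hWx⟩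

lemma zero_notMem_subSums_of_le {U V : Multiset G} (h : U ≤ V) (hV : (0 : G) ∉ subSums V) :
    (0 : G) ∉ subSums U :=
  fun hU => hV (subSums_mono_s12 h hU)

lemma subSums_singleton (a : G) : subSums {a} = {a} := by
  ext x
  constructor
  · rintro ⟨W, hW, hW0, rfl⟩
    rcases Multiset.le_singleton.mp hW with rfl | rfl
    · exact absurd rfl hW0
    · simp
  · intro hx
    exact ⟨{a}, le_rfl, Multiset.singleton_ne_zero a, (Multiset.sum_singleton a).trans hx.symm⟩

lemma subSums_union_vadd_subset (U V : Multiset G) :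
    subSums U ∪ (U.sum +ᵥ subSums V) ⊆ subSums (U + V) := by
  rintro _ (hx | ⟨_, ⟨W, hWV, hW0, rfl⟩, rfl⟩)
  · exact subSums_mono_s12 (Multiset.le_add_right U V) hx
  · refine ⟨U + W, add_le_add_right hWV U, by simp [hW0], ?_⟩
    simp [vadd_eq_add]

/-- A common element `W.sum = U.sum + W'.sum` (with `W ≤ U`, `W' ≤ V`) would make the
complement of `W` in `U`, together with `W'`, a nonempty zero-sum subsequence of `U + V`. -/
lemma disjoint_subSums_vadd {U V : Multiset G} (h : (0 : G) ∉ subSums (U + V)) :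
    Disjoint (subSums U) (U.sum +ᵥ subSums V) := by
  refine Set.disjoint_left.mpr ?_
  rintro _ ⟨W, hWU, -, rfl⟩ ⟨_, ⟨W', hW'V, hW'0, rfl⟩, hsum⟩
  obtain ⟨C, rfl⟩ := Multiset.le_iff_exists_add.mp hWU
  refine h ⟨C + W', add_le_add (Multiset.le_add_left C W) hW'V, by simp [hW'0], ?_⟩
  simp only [vadd_eq_add, Multiset.sum_add] at hsum ⊢
  linear_combination (norm := abel_nf) hsum

variable [Finite G]

lemma ncard_subSums_add_le {U V : Multiset G} (h : (0 : G) ∉ subSums (U + V)) :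
    (subSums U).ncard + (subSums V).ncard ≤ (subSums (U + V)).ncard := by
  rw [← Set.ncard_vadd_set U.sum (subSums V), ← Set.ncard_union_eq (disjoint_subSums_vadd h)]
  exact Set.ncard_le_ncard (subSums_union_vadd_subset U V)

lemma card_le_ncard_subSums {T : Multiset G} (h : (0 : G) ∉ subSums T) :
    Multiset.card T ≤ (subSums T).ncard := by
  induction T using Multiset.induction_on with
  | empty => simp
  | cons a U ih =>
    rw [← Multiset.singleton_add] at h ⊢
    have hsplit := ncard_subSums_add_le h
    rw [subSums_singleton, Set.ncard_singleton] at hsplit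
    have hU := ih (zero_notMem_subSums_of_le (Multiset.le_add_left U {a}) h)
    simp only [Multiset.card_add, Multiset.card_singleton]
    omega

lemma ncard_subSums_lt {T : Multiset G} (h : (0 : G) ∉ subSums T) :
    (subSums T).ncard < Nat.card G := by
  calc (subSums T).ncard ≤ ({0}ᶜ : Set G).ncard :=
        Set.ncard_le_ncard fun x hx (hx0 : x = 0) => h (hx0 ▸ hx)
    _ < Nat.card G := by
        rw [Set.ncard_compl, Set.ncard_singleton]
        exact Nat.sub_one_lt_of_lt Nat.card_pos

/-- Two subsums of `abc` can only coincide through a relation `x = y + z` with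
`{x, y, z} = {a, b, c}`; excluding `c = a + b` and `b = a + c` leaves six distinct ones. -/
lemma six_le_ncard_subSums_triple {a b c : G} (h : (0 : G) ∉ subSums {a, b, c})
    (hab : a ≠ b) (hac : a ≠ c) (hbc : b ≠ c) (habc : a + b ≠ c) (hacb : a + c ≠ b) :
    6 ≤ (subSums {a, b, c}).ncard := by
  have le_ab : ({a, b} : Multiset G) ≤ {a, b, c} :=
    Multiset.cons_le_cons a (Multiset.cons_le_cons b (Multiset.zero_le _))
  have le_ac : ({a, c} : Multiset G) ≤ {a, b, c} :=
    Multiset.cons_le_cons a (Multiset.le_cons_self _ b)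
  have le_bc : ({b, c} : Multiset G) ≤ {a, b, c} := Multiset.le_cons_self _ a
  have ha := sum_ne_zero_of_le h (W := {a}) (by simp) (by simp)
  have hb := sum_ne_zero_of_le h (W := {b}) (by simp) (by simp)
  have hc := sum_ne_zero_of_le h (W := {c}) (by simp) (by simp)
  have hab0 := sum_ne_zero_of_le h le_ab (by simp)
  have hac0 := sum_ne_zero_of_le h le_ac (by simp)
  have hbc0 := sum_ne_zero_of_le h le_bc (by simp)
  simp only [Multiset.sum_singleton, Multiset.insert_eq_cons, Multiset.sum_cons]
    at ha hb hc hab0 hac0 hbc0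
  have hsix : ({a, b, c, a + b, a + c, a + (b + c)} : Set G).ncard = 6 := by
    repeat rw [Set.ncard_insert_of_notMem]
    · simp
    all_goals simp only [Set.mem_insert_iff, Set.mem_singleton_iff]; grind
  have mem (W : Multiset G) (hW : W ≤ {a, b, c}) (hW0 : W ≠ 0) := sum_mem_subSums hW hW0
  rw [← hsix]
  refine Set.ncard_le_ncard ?_
  simp only [Set.insert_subset_iff, Set.singleton_subset_iff]
  refine ⟨?_, ?_, ?_, ?_, ?_, ?_⟩
  · simpa using mem {a} (by simp) (by simp)
  · simpa using mem {b} (by simp) (by simp)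
  · simpa using mem {c} (by simp) (by simp)
  · simpa using mem _ le_ab (by simp)
  · simpa using mem _ le_ac (by simp)
  · simpa using mem _ le_rfl (by simp)

/-- Two of the relations `x = y + z` with `{x, y, z} = {a, b, c}` would give `2 • w = 0` for
some `w ∈ {a, b, c}`, so after relabelling `six_le_ncard_subSums_triple` applies. -/
lemma six_le_ncard_subSums_of_ne {a b c : G} (h2 : ∀ x : G, 2 • x = 0 → x = 0)
    (h : (0 : G) ∉ subSums {a, b, c}) (hab : a ≠ b) (hac : a ≠ c) (hbc : b ≠ c) :
    6 ≤ (subSums {a, b, c}).ncard := by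
  have ha := sum_ne_zero_of_le h (W := {a}) (by simp) (by simp)
  have hb := sum_ne_zero_of_le h (W := {b}) (by simp) (by simp)
  have hc := sum_ne_zero_of_le h (W := {c}) (by simp) (by simp)
  simp only [Multiset.sum_singleton] at ha hb hc
  by_cases habc : a + b = c
  · have hcab : ({c, a, b} : Multiset G) = {a, b, c} :=
      (Multiset.cons_swap c a {b}).trans (congrArg (a ::ₘ ·) (Multiset.pair_comm c b))
    rw [← hcab] at h ⊢
    exact six_le_ncard_subSums_triple h hac.symm hbc.symm hab
      (fun h' => ha (h2 a (by rw [two_nsmul]; grind)))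
      (fun h' => hb (h2 b (by rw [two_nsmul]; grind)))
  by_cases hacb : a + c = b
  · have hbac : ({b, a, c} : Multiset G) = {a, b, c} := Multiset.cons_swap b a {c}
    rw [← hbac] at h ⊢
    exact six_le_ncard_subSums_triple h hab.symm hbc hac
      (fun h' => ha (h2 a (by rw [two_nsmul]; grind)))
      (fun h' => hc (h2 c (by rw [two_nsmul]; grind)))
  exact six_le_ncard_subSums_triple h hab hac hbc habc hacb

lemma card_add_four_le_of_three_le_card_toFinset [DecidableEq G] {T : Multiset G}
    (h2 : ∀ x : G, 2 • x = 0 → x = 0) (h : (0 : G) ∉ subSums T) (h3 : 3 ≤ T.toFinset.card) :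
    Multiset.card T + 4 ≤ Nat.card G := by
  obtain ⟨a, ha, b, hb, c, hc, hab, hac, hbc⟩ := Finset.two_lt_card.mp h3
  have habc : ({a, b, c} : Multiset G) ≤ T := by
    refine (Multiset.le_iff_subset (by simp [hab, hac, hbc])).mpr ?_
    simp only [Multiset.insert_eq_cons, Multiset.cons_subset, Multiset.singleton_subset]
    simp_all
  obtain ⟨R, rfl⟩ := Multiset.le_iff_exists_add.mp habc
  have hsplit := ncard_subSums_add_le h
  have hsix := six_le_ncard_subSums_of_ne h2 (zero_notMem_subSums_of_le habc h) hab hac hbc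
  have hR := card_le_ncard_subSums (zero_notMem_subSums_of_le (Multiset.le_add_left R _) h)
  have hlt := ncard_subSums_lt h
  simp only [Multiset.card_add, Multiset.insert_eq_cons, Multiset.card_cons,
    Multiset.card_singleton]
  omega

end SubSums

lemma eq_zero_of_two_nsmul_eq_zero {G : Type*} [AddGroup G] (hodd : Odd (Nat.card G)) {x : G}
    (hx : 2 • x = 0) : x = 0 :=
  (Nat.Coprime.nsmul_right_bijective (Nat.coprime_two_right.mpr hodd)).injective
    (hx.trans (nsmul_zero 2).symm)

lemma card_zero_insert_nsmul_eq_four {G : Type*} [AddMonoid G] [DecidableEq G] {g : G} {n : ℕ}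
    (hord : addOrderOf g = n) (hn : 4 ≤ n) :
    ({0, g, 2 • g, (n - 1) • g} : Finset G).card = 4 := by
  have inj : Set.InjOn (fun k : ℕ => k • g) ({0, 1, 2, n - 1} : Finset ℕ) := fun i hi j hj h =>
    nsmul_injOn_Iio_addOrderOf (x := g) (by simp at hi; grind) (by simp at hj; grind) h
  have himage := Finset.card_image_of_injOn inj
  simp only [Finset.image_insert, Finset.image_singleton, zero_nsmul, one_nsmul] at himage
  rw [himage]
  repeat rw [Finset.card_insert_of_notMem (by simp; omega)]
  rfl

theorem stmt12 {G : Type*} [AddCommGroup G] [Fintype G] [DecidableEq G]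
    (n : ℕ) (hn : 7 ≤ n) (hodd : Odd n)
    (g : G) (hcard : Fintype.card G = n) (hord : addOrderOf g = n)
    (S : Multiset G)
    (hS : S = Multiset.replicate (n - 3) (0 : G) + Multiset.replicate (n - 3) g +
      {2 • g, (n - 1) • g})
    (T : Multiset G) (hT0 : (0 : G) ∉ subSums T)
    (hTlen : Multiset.card T = n - 3) :
    (sumsLen n S).ncard < (subSums T).ncard ∨
      T.toFinset.card < min (n - 3) (S.toFinset.card - 1) := by
  right
  rw [← Nat.card_eq_fintype_card] at hcard
  have hsuppS : 4 ≤ S.toFinset.card := by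
    refine (card_zero_insert_nsmul_eq_four hord (by omega)).symm.trans_le
      (Finset.card_le_card ?_)
    have : n - 3 ≠ 0 := by omega
    simp [Finset.insert_subset_iff, hS, this]
  have hsuppT : T.toFinset.card < 3 := by
    by_contra! h3
    have := card_add_four_le_of_three_le_card_toFinset
      (fun x => eq_zero_of_two_nsmul_eq_zero (hcard ▸ hodd)) hT0 h3
    omega
  omega
end

section
/- Let G be a finite abelian group, k ≥ 1, and S a sequence over G with 0 ∉ supp(S), |S| ≥ k+1, and 0 ∉ Σ_{≥k}(S). If g ∈ supp(S) satisfies |Σ_{≥k}(S)| = |Σ_{≥k}(S·g^{−1})|, then Σ_{≥k}(S) + g = Σ_{≥k}(S). -/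
theorem stmt16 {G : Type*} [AddCommGroup G] [Fintype G] [DecidableEq G]
    (k : ℕ) (hk : 1 ≤ k) (S : Multiset G) (h0s : (0 : G) ∉ S.toFinset)
    (hlen : k + 1 ≤ Multiset.card S) (h0 : (0 : G) ∉ sumsGe k S)
    (g : G) (hg : g ∈ S.toFinset)
    (hcard : (sumsGe k S).ncard = (sumsGe k (S.erase g)).ncard) :
    (fun x => x + g) '' sumsGe k S = sumsGe k S := by
  have hgS : g ∈ S := Multiset.mem_toFinset.mp hg
  have hAB : sumsGe k (S.erase g) ⊆ sumsGe k S := by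
    rintro x ⟨T, hT, hkT, hs⟩
    exact ⟨T, hT.trans (Multiset.erase_le g S), hkT, hs⟩
  have hfin : (sumsGe k S).Finite := Set.toFinite _
  have hEq : sumsGe k (S.erase g) = sumsGe k S :=
    Set.eq_of_subset_of_ncard_le hAB (le_of_eq hcard) hfin
  have hsub : (fun x => x + g) '' sumsGe k S ⊆ sumsGe k S := by
    rintro _ ⟨x, hx, rfl⟩
    rw [← hEq] at hx
    obtain ⟨T, hT, hkT, hs⟩ := hx
    refine ⟨g ::ₘ T, ?_, ?_, ?_⟩
    · calc g ::ₘ T ≤ g ::ₘ S.erase g := Multiset.cons_le_cons g hT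
        _ = S := Multiset.cons_erase hgS
    · rw [Multiset.card_cons]; omega
    · rw [Multiset.sum_cons, hs]; exact add_comm g x
  refine Set.eq_of_subset_of_ncard_le hsub ?_ hfin
  rw [Set.ncard_image_of_injective _ (add_left_injective g)]
end

section
/- Let G be a cyclic group of order m, let a₀, a ∈ G with ord(a) = m, and let 1 ≤ s ≤ m − 3. Set A = {a₀ + λa : λ = 0, 1, …, s}. If A = {b₀ + λb : λ = 0, 1, …, s} for some b₀, b ∈ G, then b = a or b = −a. -/
/-- Combinatorial core: if `{0,…,s} mod m` equals the AP `{i + y·j mod m}`,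
then `j ≡ ±1 (mod m)`. -/
lemma stmt18_key (m s i j : ℕ) (hm4 : 4 ≤ m) (hs1 : 1 ≤ s) (hs2 : s ≤ m - 3)
    (H1 : ∀ x ≤ s, ∃ y ≤ s, x % m = (i + y * j) % m)
    (H2 : ∀ y ≤ s, (i + y * j) % m ≤ s) :
    j % m = 1 ∨ j % m = m - 1 := by
  set t := j % m with htdef
  have hm0 : 0 < m := by omega
  have htm : t < m := Nat.mod_lt _ hm0
  -- t ≠ 0
  have ht0 : t ≠ 0 := by
    intro h0
    obtain ⟨c, hc⟩ := Nat.dvd_of_mod_eq_zero h0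
    have hmod : ∀ y : ℕ, (i + y * j) % m = i % m := by
      intro y
      rw [hc, show i + y * (m * c) = i + (y * c) * m by ring, Nat.add_mul_mod_self_right]
    obtain ⟨y0, -, h0'⟩ := H1 0 (by omega)
    obtain ⟨y1, -, h1'⟩ := H1 1 hs1
    rw [hmod] at h0' h1'
    rw [Nat.zero_mod] at h0'
    rw [Nat.mod_eq_of_lt (show 1 < m by omega)] at h1'
    omega
  by_contra hcon
  push_neg at hcon
  obtain ⟨ht1, htm1⟩ := hcon
  -- so 2 ≤ t ≤ m - 2
  have ht2 : 2 ≤ t := by omega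
  have htm2 : t ≤ m - 2 := by omega
  set g : ℕ → ℕ := fun y => (i + y * j) % m with hgdef
  have hglt : ∀ y, g y < m := fun y => Nat.mod_lt _ hm0
  have hgle : ∀ y ≤ s, g y ≤ s := fun y hy => H2 y hy
  have hgshift : ∀ y : ℕ, (i + (y + 1) * j) % m = (g y + t) % m := by
    intro y
    have h1 : i + (y + 1) * j = (i + y * j) + j := by ring
    have h2 : (i + y * j) + j ≡ g y + t [MOD m] :=
      Nat.ModEq.add (Nat.mod_modEq _ m).symm (Nat.mod_modEq j m).symm
    rw [h1]; exact h2
  -- image of g on range (s+1) is range (s+1)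
  have himg : (Finset.range (s + 1)).image g = Finset.range (s + 1) := by
    apply Finset.Subset.antisymm
    · intro x hx
      simp only [Finset.mem_image, Finset.mem_range] at hx ⊢
      obtain ⟨y, hy, rfl⟩ := hx
      have := hgle y (by omega)
      omega
    · intro x hx
      simp only [Finset.mem_range] at hx
      obtain ⟨y, hy, hxy⟩ := H1 x (by omega)
      have hxm : x % m = x := Nat.mod_eq_of_lt (by omega)
      simp only [Finset.mem_image, Finset.mem_range]
      refine ⟨y, by omega, ?_⟩
      show (i + y * j) % m = x
      omega
  have hinj : Set.InjOn g (Finset.range (s + 1)) := by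
    apply Finset.injOn_of_card_image_eq
    rw [himg]
  -- the filter counting
  set F : Finset ℕ := (Finset.range (s + 1)).filter (fun y => (i + (y + 1) * j) % m ≤ s)
    with hFdef
  have hFlow : s ≤ F.card := by
    have hsub : Finset.range s ⊆ F := by
      intro y hy
      simp only [Finset.mem_range] at hy
      simp only [hFdef, Finset.mem_filter, Finset.mem_range]
      exact ⟨by omega, H2 (y + 1) (by omega)⟩
    calc s = (Finset.range s).card := (Finset.card_range s).symm
      _ ≤ F.card := Finset.card_le_card hsub
  set F' : Finset ℕ := (Finset.range (s + 1)).filter (fun x => (x + t) % m ≤ s) with hF'def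
  have himgF : F.image g ⊆ F' := by
    intro x hx
    simp only [Finset.mem_image, hFdef, Finset.mem_filter, Finset.mem_range] at hx
    obtain ⟨y, ⟨hy, hcond⟩, rfl⟩ := hx
    simp only [hF'def, Finset.mem_filter, Finset.mem_range]
    refine ⟨by have := hgle y (by omega); omega, ?_⟩
    rw [← hgshift y]; exact hcond
  have hcardF : F.card = (F.image g).card := by
    rw [Finset.card_image_of_injOn]
    exact hinj.mono (by intro x hx; simpa using (Finset.filter_subset _ _ hx))
  have hFF' : s ≤ F'.card := by
    calc s ≤ F.card := hFlow
      _ = (F.image g).card := hcardF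
      _ ≤ F'.card := Finset.card_le_card himgF
  -- upper bound on F'
  have hsub2 : F' ⊆ Finset.range (s + 1 - t) ∪ Finset.Ico (m - t) (s + 1) := by
    intro x hx
    simp only [hF'def, Finset.mem_filter, Finset.mem_range] at hx
    obtain ⟨hx1, hx2⟩ := hx
    simp only [Finset.mem_union, Finset.mem_range, Finset.mem_Ico]
    rcases lt_or_ge (x + t) m with h | h
    · rw [Nat.mod_eq_of_lt h] at hx2
      left; omega
    · right
      constructor
      · omega
      · exact hx1
  have hcard2 : F'.card ≤ (s + 1 - t) + (s + 1 - (m - t)) := by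
    calc F'.card ≤ (Finset.range (s + 1 - t) ∪ Finset.Ico (m - t) (s + 1)).card :=
          Finset.card_le_card hsub2
      _ ≤ (Finset.range (s + 1 - t)).card + (Finset.Ico (m - t) (s + 1)).card :=
          Finset.card_union_le _ _
      _ = (s + 1 - t) + (s + 1 - (m - t)) := by rw [Finset.card_range, Nat.card_Ico]
  omega

theorem stmt18 {G : Type*} [AddCommGroup G] [Fintype G] [IsAddCyclic G]
    (m s : ℕ) (hm : Fintype.card G = m)
    (a₀ a b₀ b : G) (ha : addOrderOf a = m) (hs1 : 1 ≤ s) (hs2 : s ≤ m - 3)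
    (hAB : (fun l : ℕ => a₀ + l • a) '' Set.Iic s = (fun l : ℕ => b₀ + l • b) '' Set.Iic s) :
    b = a ∨ b = -a := by
  have hm4 : 4 ≤ m := by omega
  have hm0 : 0 < m := by omega
  -- a generates G
  have htop : AddSubgroup.zmultiples a = ⊤ := by
    apply AddSubgroup.eq_top_of_card_eq
    rw [Nat.card_zmultiples, ha, Nat.card_eq_fintype_card, hm]
  have hma : (m : ℤ) • a = 0 := by
    have h1 : m • a = 0 := by rw [← ha]; exact addOrderOf_nsmul_eq_zero a
    rw [natCast_zsmul]; exact h1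
  have hsurj : ∀ g : G, ∃ n : ℕ, n • a = g := by
    intro g
    have hg : g ∈ AddSubgroup.zmultiples a := by rw [htop]; trivial
    obtain ⟨k, hk⟩ := AddSubgroup.mem_zmultiples_iff.mp hg
    refine ⟨(k % m).toNat, ?_⟩
    have hnonneg : 0 ≤ k % (m : ℤ) := Int.emod_nonneg k (by exact_mod_cast hm0.ne')
    have h1 : ((k % (m : ℤ)).toNat : ℤ) • a = (k % (m : ℤ)) • a := by
      rw [Int.toNat_of_nonneg hnonneg]
    have h2 : (k % (m : ℤ)) • a = k • a := by
      have hk2 : k = m * (k / m) + k % m := (Int.mul_ediv_add_emod k m).symm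
      calc (k % (m : ℤ)) • a = (m * (k / m)) • a + (k % (m : ℤ)) • a := by
            rw [show ((m : ℤ) * (k / m)) • a = (k / m) • ((m : ℤ) • a) by
              rw [mul_comm]; exact mul_zsmul a (k / m) m, hma, smul_zero, zero_add]
        _ = (m * (k / m) + k % m) • a := (add_zsmul a _ _).symm
        _ = k • a := by rw [← hk2]
    rw [← natCast_zsmul, h1, h2, hk]
  -- key modular characterization
  have K : ∀ x y : ℕ, x • a = y • a ↔ x % m = y % m := by
    intro x y
    rw [nsmul_eq_nsmul_iff_modEq, ha]
    exact Iff.rfl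
  obtain ⟨j, hb⟩ := hsurj b
  obtain ⟨i, hi⟩ := hsurj (b₀ - a₀)
  have hb₀ : b₀ = a₀ + i • a := by rw [hi]; abel
  have hcomb : ∀ y : ℕ, b₀ + y • b = a₀ + (i + y * j) • a := by
    intro y
    rw [hb₀, ← hb, add_nsmul, mul_nsmul', add_assoc]
  have H1 : ∀ x ≤ s, ∃ y ≤ s, x % m = (i + y * j) % m := by
    intro x hx
    have hmem : a₀ + x • a ∈ (fun l : ℕ => b₀ + l • b) '' Set.Iic s := by
      rw [← hAB]; exact ⟨x, hx, rfl⟩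
    obtain ⟨y, hy, hxy⟩ := hmem
    have hxy' : b₀ + y • b = a₀ + x • a := hxy
    refine ⟨y, hy, ?_⟩
    rw [hcomb y] at hxy'
    have := add_left_cancel hxy'
    exact ((K _ _).mp this).symm
  have H2 : ∀ y ≤ s, (i + y * j) % m ≤ s := by
    intro y hy
    have hmem : b₀ + y • b ∈ (fun l : ℕ => a₀ + l • a) '' Set.Iic s := by
      rw [hAB]; exact ⟨y, hy, rfl⟩
    obtain ⟨x, hx, hxy⟩ := hmem
    have hxy' : a₀ + x • a = b₀ + y • b := hxy
    rw [hcomb y] at hxy'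
    have h := (K _ _).mp (add_left_cancel hxy')
    simp only [Set.mem_Iic] at hx
    have hxm : x % m = x := Nat.mod_eq_of_lt (by omega)
    omega
  have hkey := stmt18_key m s i j hm4 hs1 hs2 H1 H2
  rcases hkey with h | h
  · left
    have h1 : j • a = (1 : ℕ) • a :=
      (K j 1).mpr (by rw [h, Nat.mod_eq_of_lt (show 1 < m by omega)])
    rw [← hb, h1, one_nsmul]
  · right
    have h1 : j • a = (m - 1) • a :=
      (K j (m - 1)).mpr (by rw [h, Nat.mod_eq_of_lt (by omega)])
    have h2 : (m - 1) • a + a = 0 := by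
      rw [← succ_nsmul, show m - 1 + 1 = m by omega, ← ha]
      exact addOrderOf_nsmul_eq_zero a
    rw [← hb, h1]
    exact eq_neg_of_add_eq_zero_left h2
end

section
/- Let m be a positive integer, G a finite abelian group, and X ⊆ G∖{0} a generating set for G. Suppose A ⊆ G satisfies |(A + g) ∖ A| ≤ m for all g ∈ X, and there exists a proper subset Y ⊂ X with |⟨Y⟩| > m and |G/⟨Y⟩| > m. Then min{|A|, |G ∖ A|} ≤ m². -/
open Finset

section Stmt19Helpers

variable {Γ : Type*} [AddCommGroup Γ] [DecidableEq Γ]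

/-- The stabilizer of a finset under translations. -/
private def stabF (B : Finset Γ) : AddSubgroup Γ where
  carrier := {g | B.image (· + g) = B}
  zero_mem' := by
    simp only [Set.mem_setOf_eq, add_zero]
    exact Finset.image_id'
  add_mem' := by
    intro a b ha hb
    simp only [Set.mem_setOf_eq] at *
    have h : B.image (· + (a + b)) = (B.image (· + a)).image (· + b) := by
      rw [Finset.image_image]
      apply Finset.image_congr
      intro x _
      simp [Function.comp, add_assoc]
    rw [h, ha, hb]
  neg_mem' := by
    intro a ha
    simp only [Set.mem_setOf_eq] at *
    have h2 : (B.image (· + a)).image (· + (-a)) = B.image (· + (-a)) := by rw [ha]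
    rw [Finset.image_image] at h2
    have h3 : B.image ((· + (-a)) ∘ (· + a)) = B := by
      have : ((· + (-a)) ∘ (· + a)) = fun x : Γ => x := by
        funext x; simp
      rw [this]
      simp
    rw [← h2, h3]

private lemma mem_stabF {B : Finset Γ} {g : Γ} : g ∈ stabF B ↔ B.image (· + g) = B :=
  Iff.rfl

/-- A nonempty finset invariant under a subgroup has at least `Nat.card L` elements. -/
private lemma natCard_le_of_invariant (L : AddSubgroup Γ) (D : Finset Γ) (hD : D.Nonempty)
    (hinv : ∀ g ∈ L, D.image (· + g) = D) : Nat.card L ≤ D.card := by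
  classical
  obtain ⟨d, hd⟩ := hD
  have hmem : ∀ g : L, d + (g : Γ) ∈ D := by
    intro g
    have := hinv g g.2
    rw [← this]
    exact Finset.mem_image_of_mem _ hd
  have hinj : Function.Injective (fun g : L => (⟨d + (g : Γ), hmem g⟩ : {x // x ∈ D})) := by
    intro a b hab
    have : d + (a : Γ) = d + (b : Γ) := congrArg Subtype.val hab
    exact Subtype.ext (add_left_cancel this)
  calc Nat.card L ≤ Nat.card {x // x ∈ D} := Nat.card_le_card_of_injective _ hinj
    _ = D.card := by rw [Nat.card_eq_fintype_card, Fintype.card_coe]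

/-- The abstract counting lemma. -/
private lemma aux_count [Fintype Γ] (m : ℕ)
    (W : Finset Γ) (hW0 : (0 : Γ) ∉ W)
    {ι : Type*} [DecidableEq ι] (I : Finset ι) (L : ι → AddSubgroup Γ)
    (hprop : ∀ i ∈ I, L i < AddSubgroup.closure (W : Set Γ))
    (c : Γ → ι → ℕ)
    (hc : ∀ i ∈ I, ∀ w ∈ W, w ∉ L i → Nat.card (L i) ≤ c w i)
    (hbudget : ∀ w ∈ W, ∑ i ∈ I, c w i ≤ m) :
    I.card ≤ m := by
  classical
  rcases I.eq_empty_or_nonempty with rfl | ⟨i₀, hi₀⟩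
  · simp
  have hWne : W.Nonempty := by
    rcases W.eq_empty_or_nonempty with rfl | h
    · exfalso
      have := hprop i₀ hi₀
      simp only [Finset.coe_empty, AddSubgroup.closure_empty] at this
      exact not_lt_bot this
    · exact h
  set s := W.card with hs
  have hs1 : 1 ≤ s := Finset.card_pos.mpr hWne
  have key : ∀ i ∈ I, s ≤ ∑ w ∈ W, c w i := by
    intro i hi
    set t := (W.filter (· ∈ L i)).card with ht
    -- t < s
    have hnotall : ∃ w ∈ W, w ∉ L i := by
      by_contra h
      push_neg at h
      have : AddSubgroup.closure (W : Set Γ) ≤ L i := by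
        rw [AddSubgroup.closure_le]
        intro w hw
        exact h w hw
      exact absurd this (not_le_of_gt (hprop i hi))
    have hts : t < s := by
      obtain ⟨w, hw, hwL⟩ := hnotall
      have : W.filter (· ∈ L i) ⊂ W := Finset.filter_ssubset.mpr ⟨w, hw, hwL⟩
      exact Finset.card_lt_card this
    -- t + 1 ≤ Nat.card (L i)
    have hcard : t + 1 ≤ Nat.card (L i) := by
      have hsub : insert (0 : Γ) (W.filter (· ∈ L i)) ⊆ Finset.univ.filter (· ∈ L i) := by
        intro x hx
        rcases Finset.mem_insert.mp hx with rfl | hx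
        · exact Finset.mem_filter.mpr ⟨Finset.mem_univ _, (L i).zero_mem⟩
        · exact Finset.mem_filter.mpr ⟨Finset.mem_univ _, (Finset.mem_filter.mp hx).2⟩
      have h0 : (0 : Γ) ∉ W.filter (· ∈ L i) := fun h => hW0 (Finset.mem_filter.mp h).1
      have hins : (insert (0 : Γ) (W.filter (· ∈ L i))).card = t + 1 := by
        rw [Finset.card_insert_of_notMem h0]
      have : Nat.card (L i) = (Finset.univ.filter (· ∈ L i)).card := by
        rw [Nat.card_eq_fintype_card, ← Fintype.card_subtype]
      rw [this, ← hins]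
      exact Finset.card_le_card hsub
    -- sum bound
    have hfilt : (W.filter (· ∉ L i)).card = s - t := by
      have := Finset.card_filter_add_card_filter_not (s := W) (p := (· ∈ L i))
      omega
    calc s ≤ (s - t) * (t + 1) := by
          have h1 : 1 ≤ s - t := by omega
          have : s - t + t = s := by omega
          calc s = (s - t) + t := by omega
            _ ≤ (s - t) * (t + 1) := by
                have : (s - t) * (t + 1) = (s - t) * t + (s - t) := by ring
                rw [this]
                have h2 : t ≤ (s - t) * t := Nat.le_mul_of_pos_left t h1
                omega
      _ ≤ (s - t) * Nat.card (L i) := Nat.mul_le_mul_left _ hcard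
      _ = ∑ _w ∈ W.filter (· ∉ L i), Nat.card (L i) := by
            rw [Finset.sum_const, smul_eq_mul, hfilt]
      _ ≤ ∑ w ∈ W.filter (· ∉ L i), c w i := by
            apply Finset.sum_le_sum
            intro w hw
            obtain ⟨hw1, hw2⟩ := Finset.mem_filter.mp hw
            exact hc i hi w hw1 hw2
      _ ≤ ∑ w ∈ W, c w i := Finset.sum_le_sum_of_subset (Finset.filter_subset _ _)
  have main : I.card * s ≤ m * s := by
    calc I.card * s = ∑ _i ∈ I, s := by rw [Finset.sum_const, smul_eq_mul]
      _ ≤ ∑ i ∈ I, ∑ w ∈ W, c w i := Finset.sum_le_sum key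
      _ = ∑ w ∈ W, ∑ i ∈ I, c w i := Finset.sum_comm
      _ ≤ ∑ _w ∈ W, m := Finset.sum_le_sum hbudget
      _ = m * s := by rw [Finset.sum_const, smul_eq_mul, mul_comm]
  exact Nat.le_of_mul_le_mul_right main hs1

end Stmt19Helpers

section Stmt19Main

set_option linter.unusedSectionVars false

variable {G : Type*} [AddCommGroup G] [Fintype G] [DecidableEq G]

/-- Sum of escaped elements per fiber is at most the total boundary. -/
private lemma sum_cost (H : AddSubgroup G) [DecidableEq (G ⧸ H)]
    (A : Finset G) (x : G) (S : Finset (G ⧸ H)) :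
    ∑ C ∈ S, ((A.filter (fun a => QuotientAddGroup.mk' H a = C)).image (· + x) \ A).card
      ≤ ((A.image (· + x)) \ A).card := by
  classical
  set π := QuotientAddGroup.mk' H with hπ
  set D : G ⧸ H → Finset G := fun C => ((A.filter (fun a => π a = C)).image (· + x) \ A) with hD
  have hmemD : ∀ C, ∀ z ∈ D C, π z = C + π x := by
    intro C z hz
    obtain ⟨hz1, _⟩ := Finset.mem_sdiff.mp hz
    obtain ⟨a, ha, rfl⟩ := Finset.mem_image.mp hz1
    obtain ⟨_, ha2⟩ := Finset.mem_filter.mp ha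
    rw [map_add, ha2]
  have hdisj : ∀ C ∈ S, ∀ C' ∈ S, C ≠ C' → Disjoint (D C) (D C') := by
    intro C _ C' _ hne
    rw [Finset.disjoint_left]
    intro z hz hz'
    apply hne
    have h1 := hmemD C z hz
    have h2 := hmemD C' z hz'
    have : C + π x = C' + π x := by rw [← h1, ← h2]
    exact add_right_cancel this
  calc ∑ C ∈ S, (D C).card = (S.biUnion D).card := (Finset.card_biUnion hdisj).symm
    _ ≤ ((A.image (· + x)) \ A).card := by
        apply Finset.card_le_card
        intro z hz
        obtain ⟨C, _, hzC⟩ := Finset.mem_biUnion.mp hz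
        obtain ⟨hz1, hz2⟩ := Finset.mem_sdiff.mp hzC
        refine Finset.mem_sdiff.mpr ⟨?_, hz2⟩
        obtain ⟨a, ha, rfl⟩ := Finset.mem_image.mp hz1
        exact Finset.mem_image_of_mem _ (Finset.mem_filter.mp ha).1

/-- The number of mixed cosets is at most `m`. -/
private lemma mixed_le (m : ℕ) (X : Finset G) (hX0 : (0 : G) ∉ X)
    (A : Finset G) (hA : ∀ g ∈ X, ((A.image (· + g)) \ A).card ≤ m)
    (Y : Finset G) (hYX : Y ⊆ X) (H : AddSubgroup G)
    (hHY : AddSubgroup.closure (Y : Set G) = H)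
    [DecidableEq (G ⧸ H)]
    (S : Finset (G ⧸ H))
    (hS : ∀ C ∈ S, (∃ a ∈ A, QuotientAddGroup.mk' H a = C) ∧
                   (∃ b ∉ A, QuotientAddGroup.mk' H b = C)) :
    S.card ≤ m := by
  classical
  set π := QuotientAddGroup.mk' H with hπ
  set fib : G ⧸ H → Finset G := fun C => A.filter (fun a => π a = C) with hfib
  have hπY : ∀ y ∈ Y, π y = 0 := by
    intro y hy
    have hyH : y ∈ H := by
      rw [← hHY]
      exact AddSubgroup.subset_closure hy
    rw [← QuotientAddGroup.ker_mk' H] at hyH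
    exact AddMonoidHom.mem_ker.mp hyH
  -- fiber + y stays in the same coset and \A = \fib
  have hsdiff : ∀ C, ∀ y ∈ Y, ((fib C).image (· + y)) \ A = ((fib C).image (· + y)) \ (fib C) := by
    intro C y hy
    ext z
    simp only [Finset.mem_sdiff, Finset.mem_image]
    constructor
    · rintro ⟨⟨a, ha, rfl⟩, h2⟩
      refine ⟨⟨a, ha, rfl⟩, ?_⟩
      intro hmem
      exact h2 (Finset.mem_filter.mp hmem).1
    · rintro ⟨⟨a, ha, rfl⟩, h2⟩
      refine ⟨⟨a, ha, rfl⟩, ?_⟩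
      intro hmem
      apply h2
      refine Finset.mem_filter.mpr ⟨hmem, ?_⟩
      rw [map_add, hπY y hy, add_zero]
      exact (Finset.mem_filter.mp ha).2
    -- done
  apply aux_count m Y (fun h => hX0 (hYX h)) S (fun C => stabF (fib C))
  · -- proper
    intro C hC
    rw [hHY]
    obtain ⟨⟨a, haA, haC⟩, ⟨b, hbA, hbC⟩⟩ := hS C hC
    have hafib : a ∈ fib C := Finset.mem_filter.mpr ⟨haA, haC⟩
    have hle : stabF (fib C) ≤ H := by
      intro g hg
      rw [mem_stabF] at hg
      have : a + g ∈ fib C := by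
        rw [← hg]
        exact Finset.mem_image_of_mem _ hafib
      have h2 : π (a + g) = C := (Finset.mem_filter.mp this).2
      rw [map_add, haC] at h2
      have h3 : π g = 0 := by rwa [add_eq_left] at h2
      have h4 : g ∈ π.ker := AddMonoidHom.mem_ker.mpr h3
      rwa [QuotientAddGroup.ker_mk'] at h4
    apply lt_of_le_of_ne hle
    intro heq
    -- then fib C is the whole coset, contradicting b
    have hbH : b - a ∈ stabF (fib C) := by
      rw [heq]
      have h5 : π (b - a) = 0 := by
        rw [map_sub, haC, hbC, sub_self]
      have h6 : b - a ∈ π.ker := AddMonoidHom.mem_ker.mpr h5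
      rwa [QuotientAddGroup.ker_mk'] at h6
    rw [mem_stabF] at hbH
    have : a + (b - a) ∈ fib C := by
      rw [← hbH]
      exact Finset.mem_image_of_mem _ hafib
    rw [add_sub_cancel] at this
    exact hbA (Finset.mem_filter.mp this).1
  · -- cost bound
    intro C hC y hy hyst
    have hCfib : (fib C).Nonempty := by
      obtain ⟨⟨a, haA, haC⟩, _⟩ := hS C hC
      exact ⟨a, Finset.mem_filter.mpr ⟨haA, haC⟩⟩
    set Dset := ((fib C).image (· + y)) \ A with hDset
    have hDeq : Dset = ((fib C).image (· + y)) \ (fib C) := hsdiff C y hy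
    have hDne : Dset.Nonempty := by
      rw [hDeq]
      rcases Finset.eq_empty_or_nonempty (((fib C).image (· + y)) \ (fib C)) with he | h
      · exfalso
        apply hyst
        rw [mem_stabF]
        have hsub : (fib C).image (· + y) ⊆ fib C := by
          intro z hz
          by_contra hz2
          have : z ∈ ((fib C).image (· + y)) \ (fib C) := Finset.mem_sdiff.mpr ⟨hz, hz2⟩
          rw [he] at this
          exact absurd this (Finset.notMem_empty z)
        apply Finset.eq_of_subset_of_card_le hsub
        rw [Finset.card_image_of_injective _ (add_left_injective y)]
      · exact h
    have hinv : ∀ g ∈ stabF (fib C), Dset.image (· + g) = Dset := by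
      intro g hg
      rw [hDeq, Finset.image_sdiff _ _ (add_left_injective g)]
      rw [mem_stabF] at hg
      have himg : ((fib C).image (· + y)).image (· + g) = (fib C).image (· + y) := by
        rw [Finset.image_image]
        have hcomp : ((· + g) ∘ (· + y)) = ((· + y) ∘ (· + g) : G → G) := by
          funext z; simp [add_assoc, add_comm y g]
        rw [hcomp, ← Finset.image_image, hg]
      rw [himg, hg, ← hDeq]  -- careful
    calc Nat.card (stabF (fib C)) ≤ Dset.card := natCard_le_of_invariant _ _ hDne hinv
      _ = _ := rfl
  · -- budget
    intro y hy
    calc ∑ C ∈ S, ((fib C).image (· + y) \ A).card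
        ≤ ((A.image (· + y)) \ A).card := sum_cost H A y S
      _ ≤ m := hA y (hYX hy)

/-- If some coset is empty of `A`, every fiber of `A` is small. -/
private lemma fib_card_le (m : ℕ) (X : Finset G) (hX0 : (0 : G) ∉ X)
    (hgen : AddSubgroup.closure (X : Set G) = ⊤)
    (A : Finset G) (hA : ∀ g ∈ X, ((A.image (· + g)) \ A).card ≤ m)
    (H : AddSubgroup G) [DecidableEq (G ⧸ H)] [Fintype (G ⧸ H)]
    (hempty : ∃ C₀ : G ⧸ H, ∀ a ∈ A, QuotientAddGroup.mk' H a ≠ C₀) :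
    ∀ C : G ⧸ H, (A.filter (fun a => QuotientAddGroup.mk' H a = C)).card ≤ m := by
  classical
  set π := QuotientAddGroup.mk' H with hπ
  set f : G ⧸ H → ℕ := fun C => (A.filter (fun a => π a = C)).card with hf
  obtain ⟨C₀, hC₀⟩ := hempty
  have hfC₀ : f C₀ = 0 := by
    simp only [hf, Finset.card_eq_zero, Finset.filter_eq_empty_iff]
    intro a ha
    exact hC₀ a ha
  set t₀ := Finset.univ.sup f with ht₀
  have hft₀ : ∀ C, f C ≤ t₀ := fun C => Finset.le_sup (Finset.mem_univ C)
  suffices ht : t₀ ≤ m by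
    intro C
    exact le_trans (hft₀ C) ht
  set Slev : ℕ → Finset (G ⧸ H) := fun θ => Finset.univ.filter (fun C => θ ≤ f C) with hSlev
  set W : Finset (G ⧸ H) := (X.image π) \ {0} with hW
  have hW0 : (0 : G ⧸ H) ∉ W := by simp [hW]
  have hWcl : AddSubgroup.closure (W : Set (G ⧸ H)) = ⊤ := by
    have h1 : AddSubgroup.closure ((X.image π : Finset (G ⧸ H)) : Set (G ⧸ H)) = ⊤ := by
      rw [Finset.coe_image, ← AddMonoidHom.map_closure, hgen,
        AddSubgroup.map_top_of_surjective _ (QuotientAddGroup.mk'_surjective H)]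
    apply le_antisymm le_top
    rw [← h1, AddSubgroup.closure_le]
    intro w hw
    by_cases hw0 : w = (0 : G ⧸ H)
    · subst hw0
      exact AddSubgroup.zero_mem _
    · apply AddSubgroup.subset_closure
      rw [hW]
      simp only [Finset.coe_sdiff, Finset.coe_singleton, Set.mem_diff, Set.mem_singleton_iff]
      exact ⟨hw, hw0⟩
  have hIcard : (Finset.Icc 1 t₀).card = t₀ := by
    rw [Nat.card_Icc]
    omega
  rw [← hIcard]
  refine aux_count m W hW0 (Finset.Icc 1 t₀) (fun θ => stabF (Slev θ))
    ?_ (fun w θ => (((Slev θ).image (· + w)) \ (Slev θ)).card) ?_ ?_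
  · -- properness
    intro θ hθ
    rw [hWcl, lt_top_iff_ne_top]
    intro heq
    obtain ⟨hθ1, hθ2⟩ := Finset.mem_Icc.mp hθ
    obtain ⟨C₁, -, hC₁⟩ := Finset.exists_mem_eq_sup Finset.univ univ_nonempty f
    have hC₁mem : C₁ ∈ Slev θ := by
      simp only [hSlev, Finset.mem_filter, Finset.mem_univ, true_and]
      rw [← hC₁]
      exact hθ2
    have huniv : Slev θ = Finset.univ := by
      apply Finset.eq_univ_iff_forall.mpr
      intro D
      have heq' : stabF (Slev θ) = ⊤ := heq
      have hDst : (D - C₁) ∈ stabF (Slev θ) := by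
        rw [heq']
        trivial
      rw [mem_stabF] at hDst
      rw [← hDst]
      refine Finset.mem_image.mpr ⟨C₁, hC₁mem, by abel⟩
    have hC₀mem : C₀ ∈ Slev θ := huniv ▸ Finset.mem_univ C₀
    simp only [hSlev, Finset.mem_filter, Finset.mem_univ, true_and, hfC₀] at hC₀mem
    omega
  · -- cost bound
    intro θ hθ w hw hwst0
    have hwst : w ∉ stabF (Slev θ) := hwst0
    set Dset := ((Slev θ).image (· + w)) \ (Slev θ) with hDset
    have hDne : Dset.Nonempty := by
      rcases Finset.eq_empty_or_nonempty Dset with he | h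
      · exfalso
        apply hwst
        rw [mem_stabF]
        have hsub : (Slev θ).image (· + w) ⊆ Slev θ := by
          intro z hz
          by_contra hz2
          have : z ∈ Dset := Finset.mem_sdiff.mpr ⟨hz, hz2⟩
          rw [he] at this
          exact absurd this (Finset.notMem_empty z)
        apply Finset.eq_of_subset_of_card_le hsub
        rw [Finset.card_image_of_injective _ (add_left_injective w)]
      · exact h
    have hinv : ∀ g ∈ stabF (Slev θ), Dset.image (· + g) = Dset := by
      intro g hg
      rw [hDset, Finset.image_sdiff _ _ (add_left_injective g)]
      rw [mem_stabF] at hg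
      have himg : ((Slev θ).image (· + w)).image (· + g) = (Slev θ).image (· + w) := by
        rw [Finset.image_image]
        have hcomp : ((· + g) ∘ (· + w)) = ((· + w) ∘ (· + g) : (G ⧸ H) → (G ⧸ H)) := by
          funext z
          simp [add_assoc, add_comm w g]
        rw [hcomp, ← Finset.image_image, hg]
      rw [himg, hg]
    exact natCard_le_of_invariant _ _ hDne hinv
  · -- budget
    intro w hw
    obtain ⟨hw1, -⟩ := Finset.mem_sdiff.mp hw
    obtain ⟨x, hxX, hxw⟩ := Finset.mem_image.mp hw1
    -- rewrite each summand as a filter count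
    have hcount : ∀ θ, (((Slev θ).image (· + w)) \ (Slev θ)).card
        = (Finset.univ.filter (fun C => θ ≤ f C ∧ f (C + w) < θ)).card := by
      intro θ
      have hset : ((Slev θ).image (· + w)) \ (Slev θ)
          = ((Slev θ).filter (fun C => C + w ∉ Slev θ)).image (· + w) := by
        ext D
        simp only [Finset.mem_sdiff, Finset.mem_image, Finset.mem_filter]
        constructor
        · rintro ⟨⟨C, hC, rfl⟩, hD⟩
          exact ⟨C, ⟨hC, hD⟩, rfl⟩
        · rintro ⟨C, ⟨hC, hD⟩, rfl⟩
          exact ⟨⟨C, hC, rfl⟩, hD⟩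
      rw [hset, Finset.card_image_of_injective _ (add_left_injective w)]
      congr 1
      ext C
      simp only [hSlev, Finset.mem_filter, Finset.mem_univ, true_and, not_le]
    calc ∑ θ ∈ Finset.Icc 1 t₀, (((Slev θ).image (· + w)) \ (Slev θ)).card
        = ∑ θ ∈ Finset.Icc 1 t₀,
            (Finset.univ.filter (fun C => θ ≤ f C ∧ f (C + w) < θ)).card := by
          apply Finset.sum_congr rfl
          intro θ _
          exact hcount θ
      _ = ∑ C : G ⧸ H, (f C - f (C + w)) := by
          have hswap : ∑ θ ∈ Finset.Icc 1 t₀,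
              (Finset.univ.filter (fun C => θ ≤ f C ∧ f (C + w) < θ)).card
              = ∑ C : G ⧸ H,
                ((Finset.Icc 1 t₀).filter (fun θ => θ ≤ f C ∧ f (C + w) < θ)).card := by
            simp only [Finset.card_filter]
            exact Finset.sum_comm
          rw [hswap]
          apply Finset.sum_congr rfl
          intro C _
          have hioc : (Finset.Icc 1 t₀).filter (fun θ => θ ≤ f C ∧ f (C + w) < θ)
              = Finset.Ioc (f (C + w)) (f C) := by
            ext θ
            simp only [Finset.mem_filter, Finset.mem_Icc, Finset.mem_Ioc]
            have := hft₀ C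
            omega
          rw [hioc, Nat.card_Ioc]
      _ ≤ ∑ C : G ⧸ H, ((A.filter (fun a => π a = C)).image (· + x) \ A).card := by
          apply Finset.sum_le_sum
          intro C _
          set E := (A.filter (fun a => π a = C)).image (· + x) with hE
          have hEcard : E.card = f C := by
            rw [hE, Finset.card_image_of_injective _ (add_left_injective x)]
          have hEsub : E \ (A.filter (fun a => π a = C + w)) ⊆ E \ A := by
            intro z hz
            obtain ⟨hz1, hz2⟩ := Finset.mem_sdiff.mp hz
            refine Finset.mem_sdiff.mpr ⟨hz1, ?_⟩
            intro hzA
            apply hz2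
            refine Finset.mem_filter.mpr ⟨hzA, ?_⟩
            obtain ⟨a, ha, rfl⟩ := Finset.mem_image.mp hz1
            rw [map_add, hxw, (Finset.mem_filter.mp ha).2]
          calc f C - f (C + w)
              = E.card - (A.filter (fun a => π a = C + w)).card := by rw [hEcard]
            _ ≤ (E \ (A.filter (fun a => π a = C + w))).card := Finset.le_card_sdiff _ _
            _ ≤ (E \ A).card := Finset.card_le_card hEsub
      _ ≤ ((A.image (· + x)) \ A).card := sum_cost H A x Finset.univ
      _ ≤ m := hA x hxX

/-- If some coset is empty of `A`, then `A` is small. -/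
private lemma small_of_empty (m : ℕ) (X : Finset G) (hX0 : (0 : G) ∉ X)
    (hgen : AddSubgroup.closure (X : Set G) = ⊤)
    (A : Finset G) (hA : ∀ g ∈ X, ((A.image (· + g)) \ A).card ≤ m)
    (Y : Finset G) (hYX : Y ⊆ X) (H : AddSubgroup G)
    (hHY : AddSubgroup.closure (Y : Set G) = H)
    (hn : m < Nat.card H)
    [DecidableEq (G ⧸ H)] [Fintype (G ⧸ H)]
    (hempty : ∃ C₀ : G ⧸ H, ∀ a ∈ A, QuotientAddGroup.mk' H a ≠ C₀) :
    A.card ≤ m ^ 2 := by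
  classical
  set π := QuotientAddGroup.mk' H with hπ
  set fib : G ⧸ H → Finset G := fun C => A.filter (fun a => π a = C) with hfib
  have hsmall : ∀ C, (fib C).card ≤ m := fib_card_le m X hX0 hgen A hA H hempty
  have hnotfull : ∀ C : G ⧸ H, ∃ b ∉ A, π b = C := by
    intro C
    obtain ⟨g₀, hg₀⟩ := QuotientAddGroup.mk'_surjective H C
    set coset := Finset.univ.filter (fun g : G => π g = C) with hcoset
    have hHle : Nat.card H ≤ coset.card := by
      have hmem : ∀ h : H, g₀ + (h : G) ∈ coset := by
        intro h
        refine Finset.mem_filter.mpr ⟨Finset.mem_univ _, ?_⟩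
        rw [map_add, hg₀]
        have hz : π (h : G) = 0 := (QuotientAddGroup.eq_zero_iff (h : G)).mpr h.2
        rw [hz, add_zero]
      have hinj : Function.Injective
          (fun h : H => (⟨g₀ + (h : G), hmem h⟩ : {x // x ∈ coset})) := by
        intro a b hab
        have : g₀ + (a : G) = g₀ + (b : G) := congrArg Subtype.val hab
        exact Subtype.ext (add_left_cancel this)
      calc Nat.card H ≤ Nat.card {x // x ∈ coset} := Nat.card_le_card_of_injective _ hinj
        _ = coset.card := by rw [Nat.card_eq_fintype_card, Fintype.card_coe]
    have hlt : (fib C).card < coset.card := lt_of_le_of_lt (hsmall C) (lt_of_lt_of_le hn hHle)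
    have hfibsub : fib C ⊆ coset := by
      intro a ha
      exact Finset.mem_filter.mpr ⟨Finset.mem_univ _, (Finset.mem_filter.mp ha).2⟩
    have hne : (coset \ fib C).Nonempty := by
      rw [← Finset.card_pos, Finset.card_sdiff_of_subset hfibsub]
      omega
    obtain ⟨b, hb⟩ := hne
    obtain ⟨hb1, hb2⟩ := Finset.mem_sdiff.mp hb
    refine ⟨b, ?_, (Finset.mem_filter.mp hb1).2⟩
    intro hbA
    exact hb2 (Finset.mem_filter.mpr ⟨hbA, (Finset.mem_filter.mp hb1).2⟩)
  have hsum : A.card = ∑ C : G ⧸ H, (fib C).card :=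
    Finset.card_eq_sum_card_fiberwise (fun a _ => Finset.mem_univ (π a))
  set supp := Finset.univ.filter (fun C => (fib C).Nonempty) with hsupp
  have hsum2 : A.card = ∑ C ∈ supp, (fib C).card := by
    rw [hsum]
    symm
    apply Finset.sum_subset (Finset.subset_univ _)
    intro C _ hC
    rw [Finset.card_eq_zero]
    rw [hsupp] at hC
    simp only [Finset.mem_filter, Finset.mem_univ, true_and] at hC
    exact Finset.not_nonempty_iff_eq_empty.mp hC
  have hsuppcard : supp.card ≤ m := by
    apply mixed_le m X hX0 A hA Y hYX H hHY supp
    intro C hC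
    rw [hsupp] at hC
    obtain ⟨a, ha⟩ := (Finset.mem_filter.mp hC).2
    exact ⟨⟨a, (Finset.mem_filter.mp ha).1, (Finset.mem_filter.mp ha).2⟩, hnotfull C⟩
  calc A.card = ∑ C ∈ supp, (fib C).card := hsum2
    _ ≤ ∑ _C ∈ supp, m := Finset.sum_le_sum (fun C _ => hsmall C)
    _ = supp.card * m := by rw [Finset.sum_const, smul_eq_mul]
    _ ≤ m * m := Nat.mul_le_mul_right m hsuppcard
    _ = m ^ 2 := (sq m).symm

/-- The boundary of the complement equals the boundary of the set. -/
private lemma compl_budget (A : Finset G) (g : G) :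
    (((Finset.univ \ A).image (· + g)) \ (Finset.univ \ A)).card
      = ((A.image (· + g)) \ A).card := by
  classical
  have h1 : ((Finset.univ \ A).image (· + g)) \ (Finset.univ \ A)
      = A \ (A.image (· + g)) := by
    ext z
    constructor
    · intro hz
      obtain ⟨hz1, hz2⟩ := Finset.mem_sdiff.mp hz
      obtain ⟨a, ha, rfl⟩ := Finset.mem_image.mp hz1
      have haA : a ∉ A := (Finset.mem_sdiff.mp ha).2
      have hzA : a + g ∈ A := by
        by_contra hzA
        exact hz2 (Finset.mem_sdiff.mpr ⟨Finset.mem_univ _, hzA⟩)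
      refine Finset.mem_sdiff.mpr ⟨hzA, ?_⟩
      intro hmem
      obtain ⟨b, hb, hba⟩ := Finset.mem_image.mp hmem
      have hba' : b = a := add_right_cancel hba
      exact haA (hba' ▸ hb)
    · intro hz
      obtain ⟨hz1, hz2⟩ := Finset.mem_sdiff.mp hz
      refine Finset.mem_sdiff.mpr ⟨?_, ?_⟩
      · refine Finset.mem_image.mpr ⟨z - g, ?_, sub_add_cancel z g⟩
        refine Finset.mem_sdiff.mpr ⟨Finset.mem_univ _, ?_⟩
        intro hzg
        exact hz2 (Finset.mem_image.mpr ⟨z - g, hzg, sub_add_cancel z g⟩)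
      · intro hmem
        exact (Finset.mem_sdiff.mp hmem).2 hz1
  rw [h1]
  exact Finset.card_sdiff_comm
    (Finset.card_image_of_injective _ (add_left_injective g)).symm

end Stmt19Main

theorem stmt19 {G : Type*} [AddCommGroup G] [Fintype G] [DecidableEq G]
    (m : ℕ) (hm : 0 < m) (X : Finset G) (hX0 : (0 : G) ∉ X)
    (hgen : AddSubgroup.closure (X : Set G) = ⊤)
    (A : Finset G) (hA : ∀ g ∈ X, ((A.image (· + g)) \ A).card ≤ m)
    (hY : ∃ Y : Finset G, Y ⊂ X ∧ m < Nat.card (AddSubgroup.closure (Y : Set G)) ∧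
      m < Nat.card (G ⧸ AddSubgroup.closure ((Y : Set G)))) :
    min A.card (Finset.univ \ A).card ≤ m ^ 2 := by
  classical
  obtain ⟨Y, hYX, hn, hq⟩ := hY
  set H : AddSubgroup G := AddSubgroup.closure (Y : Set G) with hH
  haveI : DecidableEq (G ⧸ H) := Classical.decEq _
  haveI : Fintype (G ⧸ H) := Fintype.ofSurjective _ (QuotientAddGroup.mk'_surjective H)
  set π := QuotientAddGroup.mk' H with hπ
  by_cases h1 : ∃ C : G ⧸ H, ∀ a ∈ A, π a ≠ C
  · have hsm := small_of_empty m X hX0 hgen A hA Y hYX.subset H hH.symm hn h1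
    exact le_trans (min_le_left _ _) hsm
  by_cases h2 : ∃ C : G ⧸ H, ∀ a ∈ (Finset.univ \ A), π a ≠ C
  · have hA' : ∀ g ∈ X, (((Finset.univ \ A).image (· + g)) \ (Finset.univ \ A)).card ≤ m := by
      intro g hg
      rw [compl_budget]
      exact hA g hg
    have hsm := small_of_empty m X hX0 hgen (Finset.univ \ A) hA' Y hYX.subset H hH.symm hn h2
    exact le_trans (min_le_right _ _) hsm
  · push_neg at h1 h2
    exfalso
    have hall : (Finset.univ : Finset (G ⧸ H)).card ≤ m := by
      apply mixed_le m X hX0 A hA Y hYX.subset H hH.symm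
      intro C _
      obtain ⟨b, hb, hbc⟩ := h2 C
      exact ⟨h1 C, ⟨b, (Finset.mem_sdiff.mp hb).2, hbc⟩⟩
    rw [Finset.card_univ, ← Nat.card_eq_fintype_card] at hall
    omega
end
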